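/- arXiv:2107.00081 — 2 statements merged into one kernel-verified Lean document; each statement's English description precedes it below -/
import Mathlib

section
/- For every λ ≥ 0, the map (x, y) ↦ d_λ(x, y) is continuous on Ω × Ω. -/
open Set Filter Topology MeasureTheory
open scoped Pointwise ENNReal

noncomputable section

abbrev Euc (d : ℕ) := EuclideanSpace ℝ (Fin d)

structure SupSetup (d : ℕ) where
  Ω : Set (Euc d)
  H : Euc d → Euc d → ℝ
  isOpen_Ω : IsOpen Ω
  isBounded_Ω : Bornology.IsBounded Ω
  isConnected_Ω : IsConnected Ω
  H_nonneg : ∀ x ∈ Ω, ∀ p : Euc d, 0 ≤ H x p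
  H_zero : ∀ x ∈ Ω, H x 0 = 0
  H_quasiconvex : ∀ x ∈ Ω, ∀ lam : ℝ, Convex ℝ {p : Euc d | H x p ≤ lam}
  H_coercive : ∀ lam : ℝ, ∃ M : ℝ, 0 ≤ M ∧ ∀ x ∈ Ω, ∀ p : Euc d, H x p ≤ lam → ‖p‖ ≤ M
  H_cont : ContinuousOn (fun z : Euc d × Euc d => H z.1 z.2) (Ω ×ˢ (univ : Set (Euc d)))
  H_D : ∀ lam mu : ℝ, 0 ≤ mu → mu < lam → ∃ α > (0:ℝ), ∀ x ∈ Ω,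
      {p : Euc d | H x p ≤ mu} + Metric.ball (0 : Euc d) α ⊆ {p : Euc d | H x p ≤ lam}
  H_E : ∀ β > (0:ℝ), ∀ lam > (0:ℝ), ∀ V : Set (Euc d), IsOpen V → closure V ⊆ Ω →
      ∃ δ > (0:ℝ), ∀ lam' : ℝ, |lam - lam'| < δ → ∀ x ∈ V,
        {p : Euc d | H x p < lam} ⊆ {p : Euc d | H x p < lam'} + Metric.ball (0 : Euc d) β

variable {d : ℕ}

/-- The quasi-convex conjugate `L_λ(x,q) = sup { p·q : H(x,p) ≤ λ }`. -/
def Lfun (S : SupSetup d) (lam : ℝ) (x q : Euc d) : ℝ :=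
  sSup ((fun p : Euc d => (inner ℝ p q : ℝ)) '' {p : Euc d | S.H x p ≤ lam})

/-- A Lipschitz path from `x` to `y` with image (on `[0,1]`) inside `A`. -/
def IsPathIn (A : Set (Euc d)) (x y : Euc d) (γ : ℝ → Euc d) : Prop :=
  (∃ K : NNReal, LipschitzWith K γ) ∧ (∀ t ∈ Icc (0:ℝ) 1, γ t ∈ A) ∧ γ 0 = x ∧ γ 1 = y

/-- The energy `∫₀¹ L_λ(γ(t), γ'(t)) dt` of a path. -/
def energy (S : SupSetup d) (lam : ℝ) (γ : ℝ → Euc d) : ℝ :=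
  ∫ t in Ioo (0:ℝ) 1, Lfun S lam (γ t) (deriv γ t)

/-- The pseudo-distance `d_λ` on `Ω`. -/
def pdist (S : SupSetup d) (lam : ℝ) (x y : Euc d) : ℝ≥0∞ :=
  ⨅ (γ : ℝ → Euc d) (_ : IsPathIn S.Ω x y γ), ENNReal.ofReal (energy S lam γ)

/-- The extension of the pseudo-distance `d_λ` to the closure of `Ω`. -/
def pdistCl (S : SupSetup d) (lam : ℝ) (x y : Euc d) : ℝ≥0∞ :=
  ⨅ (xs : ℕ → Euc d) (ys : ℕ → Euc d) (_ : ∀ n, xs n ∈ S.Ω) (_ : ∀ n, ys n ∈ S.Ω)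
    (_ : Tendsto xs atTop (𝓝 x)) (_ : Tendsto ys atTop (𝓝 y)),
    Filter.liminf (fun n => pdist S lam (xs n) (ys n)) atTop

/-- `u ∈ W^{1,∞}(Ω)`: a uniform bound on the a.e. gradient, encoded as uniform local
Lipschitz continuity. -/
def W1inf (Ω : Set (Euc d)) (u : Euc d → ℝ) : Prop :=
  ∃ K : NNReal, ∀ x ∈ Ω, ∃ ε > (0:ℝ), Metric.ball x ε ⊆ Ω ∧
    LipschitzOnWith K u (Metric.ball x ε)

/-- `u ∈ W^{1,∞}(Ω) ∩ C(cl Ω)`. -/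
def W1infC (S : SupSetup d) (u : Euc d → ℝ) : Prop :=
  W1inf S.Ω u ∧ ContinuousOn u (closure S.Ω)

/-- The supremal functional `F(u) = esssup_{x ∈ Ω} H(x, Du(x))`. -/
def Fval (S : SupSetup d) (u : Euc d → ℝ) : ℝ :=
  essSup (fun x => S.H x (gradient u x)) (volume.restrict S.Ω)

/-- The supremal functional localized on `V`. -/
def FvalOn (S : SupSetup d) (V : Set (Euc d)) (u : Euc d → ℝ) : ℝ :=
  essSup (fun x => S.H x (gradient u x)) (volume.restrict V)

/-- Admissible competitor for problem (P) with boundary datum `g`. -/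
def IsAdmissible (S : SupSetup d) (g u : Euc d → ℝ) : Prop :=
  W1infC S u ∧ ∀ x ∈ frontier S.Ω, u x = g x

/-- Minimizer of problem (P). -/
def IsMinimizer (S : SupSetup d) (g u : Euc d → ℝ) : Prop :=
  IsAdmissible S g u ∧ ∀ v : Euc d → ℝ, IsAdmissible S g v → Fval S u ≤ Fval S v

/-- Absolute minimizer of problem (P). -/
def IsAbsMinimizer (S : SupSetup d) (g u : Euc d → ℝ) : Prop :=
  IsAdmissible S g u ∧
  ∀ V : Set (Euc d), IsOpen V → V.Nonempty → closure V ⊆ S.Ω →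
    ∀ v : Euc d → ℝ,
      (W1inf V v ∧ ContinuousOn v (closure V)) →
      (∀ x ∈ frontier V, v x = u x) →
      FvalOn S V u ≤ FvalOn S V v

/-- The set of `λ ≥ 0` such that `g(y) - g(x) ≤ d_λ(x,y)` for all boundary points. -/
def bLam (S : SupSetup d) (g : Euc d → ℝ) : Set ℝ :=
  {lam : ℝ | 0 ≤ lam ∧ ∀ x ∈ frontier S.Ω, ∀ y ∈ frontier S.Ω,
    ENNReal.ofReal (g y - g x) ≤ pdistCl S lam x y}

/-- `μ = inf bLam`. -/
def muVal (S : SupSetup d) (g : Euc d → ℝ) : ℝ := sInf (bLam S g)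

/-- `S⁻_λ(g)(x) = sup_{y ∈ ∂Ω} (g(y) - d_λ(x,y))`, as an extended real number. -/
def SminusE (S : SupSetup d) (g : Euc d → ℝ) (lam : ℝ) (x : Euc d) : EReal :=
  sSup {r : EReal | ∃ y ∈ frontier S.Ω, r = (g y : EReal) - ((pdistCl S lam x y : ℝ≥0∞) : EReal)}

/-- `S⁺_λ(g)(x) = inf_{y ∈ ∂Ω} (g(y) + d_λ(y,x))`, as an extended real number. -/
def SplusE (S : SupSetup d) (g : Euc d → ℝ) (lam : ℝ) (x : Euc d) : EReal :=
  sInf {r : EReal | ∃ y ∈ frontier S.Ω, r = (g y : EReal) + ((pdistCl S lam y x : ℝ≥0∞) : EReal)}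

/-- `μ(x₀,r) = inf {λ ≥ 0 : u(x) - u(x₀) ≤ d_λ(x₀,x) on B(x₀,r)}`. -/
def muFun (S : SupSetup d) (u : Euc d → ℝ) (x₀ : Euc d) (r : ℝ) : ℝ :=
  sInf {lam : ℝ | 0 ≤ lam ∧ ∀ x ∈ Metric.ball x₀ r,
    ENNReal.ofReal (u x - u x₀) ≤ pdist S lam x₀ x}

/-- The pointwise value `H(x₀, Du)(x₀) = inf_{0 < r < dist(x₀,∂Ω)} μ(x₀,r)`. -/
def Hof (S : SupSetup d) (u : Euc d → ℝ) (x₀ : Euc d) : ℝ :=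
  sInf (muFun S u x₀ '' Ioo 0 (Metric.infDist x₀ (frontier S.Ω)))

/-- The attainment set `A(w) = {x ∈ Ω : H(x,Dw)(x) = esssup H(·,Dw(·))}`. -/
def Aset (S : SupSetup d) (w : Euc d → ℝ) : Set (Euc d) :=
  {x ∈ S.Ω | Hof S w x = Fval S w}

/-- The `d_λ`-length of a curve (allowed to touch the boundary), computed with
the extended pseudo-distance. -/
def dlength (S : SupSetup d) (lam : ℝ) (γ : ℝ → Euc d) : ℝ≥0∞ :=
  ⨆ (n : ℕ) (t : Fin (n + 1) → ℝ) (_ : Monotone t) (_ : t 0 = 0) (_ : t (Fin.last n) = 1),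
    ∑ i : Fin n, pdistCl S lam (γ (t i.castSucc)) (γ (t i.succ))

/-- The `d_λ`-length of a curve inside `Ω`. -/
def dlenIn (S : SupSetup d) (lam : ℝ) (γ : ℝ → Euc d) : ℝ≥0∞ :=
  ⨆ (n : ℕ) (t : Fin (n + 1) → ℝ) (_ : Monotone t) (_ : t 0 = 0) (_ : t (Fin.last n) = 1),
    ∑ i : Fin n, pdist S lam (γ (t i.castSucc)) (γ (t i.succ))

end


noncomputable section Stmt3Aux
open MeasureTheory

namespace Stmt3Aux

variable {d : ℕ}

/-- clamp to `[0,1]`. -/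
def cl (t : ℝ) : ℝ := max 0 (min 1 t)

lemma cl_mem (t : ℝ) : cl t ∈ Icc (0:ℝ) 1 :=
  ⟨le_max_left _ _, max_le (by norm_num) (min_le_left _ _)⟩

lemma cl_eq_self {t : ℝ} (ht : t ∈ Icc (0:ℝ) 1) : cl t = t := by
  unfold cl; rw [min_eq_right ht.2, max_eq_right ht.1]

lemma cl_lipschitz : LipschitzWith 1 cl := by
  rw [lipschitzWith_iff_dist_le_mul]
  intro s t
  rw [Real.dist_eq, Real.dist_eq, NNReal.coe_one, one_mul]
  unfold cl
  calc |max 0 (min 1 s) - max 0 (min 1 t)| ≤ |min 1 s - min 1 t| := by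
        simpa [max_comm] using abs_max_sub_max_le_abs (min 1 s) (min 1 t) 0
    _ ≤ |s - t| := by
        simpa using abs_min_sub_min_le_max 1 s 1 t

lemma lfun_mem_Icc (S : SupSetup d) {lam : ℝ} (hlam : 0 ≤ lam) {x : Euc d} (hx : x ∈ S.Ω)
    {M : ℝ} (hM : ∀ p : Euc d, S.H x p ≤ lam → ‖p‖ ≤ M) (q : Euc d) :
    Lfun S lam x q ∈ Icc 0 (M * ‖q‖) := by
  have hM0 : 0 ≤ M := le_trans (by simp) (hM 0 (by rw [S.H_zero x hx]; exact hlam))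
  have hub : ∀ r ∈ (fun p : Euc d => (inner ℝ p q : ℝ)) '' {p | S.H x p ≤ lam}, r ≤ M * ‖q‖ := by
    rintro r ⟨p, hp, rfl⟩
    exact (real_inner_le_norm p q).trans (mul_le_mul_of_nonneg_right (hM p hp) (norm_nonneg q))
  constructor
  · have h0 : (0:ℝ) ∈ (fun p : Euc d => (inner ℝ p q : ℝ)) '' {p | S.H x p ≤ lam} :=
      ⟨0, by simpa [Set.mem_setOf_eq, S.H_zero x hx] using hlam, by simp⟩
    exact le_csSup ⟨M * ‖q‖, hub⟩ h0
  · exact Real.sSup_le hub (mul_nonneg hM0 (norm_nonneg q))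

lemma lfun_smul (S : SupSetup d) (lam : ℝ) (x : Euc d) {c : ℝ} (hc : 0 ≤ c) (q : Euc d) :
    Lfun S lam x (c • q) = c * Lfun S lam x q := by
  unfold Lfun
  have h : (fun p : Euc d => (inner ℝ p (c • q) : ℝ)) '' {p | S.H x p ≤ lam}
      = c • ((fun p : Euc d => (inner ℝ p q : ℝ)) '' {p | S.H x p ≤ lam}) := by
    rw [← Set.image_smul, Set.image_image]
    exact Set.image_congr fun p _ => by rw [real_inner_smul_right]; rfl
  rw [h, Real.sSup_smul_of_nonneg hc, smul_eq_mul]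

lemma deriv_comp_affine (f : ℝ → Euc d) {a : ℝ} (ha : a ≠ 0) (b t : ℝ) :
    deriv (fun s => f (a * s + b)) t = a • deriv f (a * t + b) := by
  by_cases hd : DifferentiableAt ℝ f (a * t + b)
  · have h1 : HasDerivAt (fun s : ℝ => a * s + b) a t := by
      simpa using ((hasDerivAt_id t).const_mul a).add_const b
    have h2 : HasDerivAt (fun s => f (a * s + b)) (a • deriv f (a * t + b)) t :=
      HasDerivAt.scomp t hd.hasDerivAt h1
    exact h2.deriv
  · rw [deriv_zero_of_not_differentiableAt hd, smul_zero,
      deriv_zero_of_not_differentiableAt]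
    intro hcomp
    apply hd
    have he : f = (fun s => f (a * s + b)) ∘ (fun y : ℝ => (y - b) / a) := by
      funext y
      have : a * ((y - b) / a) + b = y := by field_simp; ring
      simp [Function.comp, this]
    rw [he]
    have h3 : DifferentiableAt ℝ (fun y : ℝ => (y - b) / a) (a * t + b) :=
      (differentiableAt_id.sub_const b).div_const a
    have h4 : ((a * t + b) - b) / a = t := by field_simp; ring
    have h5 : DifferentiableAt ℝ (fun s => f (a * s + b)) (((a * t + b) - b) / a) := by
      rw [h4]; exact hcomp
    exact DifferentiableAt.comp _ h5 h3

lemma lipschitz_glue {f g : ℝ → Euc d} {K₁ K₂ : NNReal} (hf : LipschitzWith K₁ f)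
    (hg : LipschitzWith K₂ g) {c : ℝ} (hc : f c = g c) :
    LipschitzWith (max K₁ K₂) fun t => if t ≤ c then f t else g t := by
  rw [lipschitzWith_iff_dist_le_mul] at hf hg ⊢
  set K : ℝ := ((max K₁ K₂ : NNReal) : ℝ) with hK
  have hK1 : ∀ s t : ℝ, dist (f s) (f t) ≤ K * dist s t := fun s t =>
    (hf s t).trans (mul_le_mul_of_nonneg_right (by exact_mod_cast le_max_left K₁ K₂) dist_nonneg)
  have hK2 : ∀ s t : ℝ, dist (g s) (g t) ≤ K * dist s t := fun s t =>
    (hg s t).trans (mul_le_mul_of_nonneg_right (by exact_mod_cast le_max_right K₁ K₂) dist_nonneg)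
  have hK0 : 0 ≤ K := NNReal.coe_nonneg _
  have main : ∀ s t : ℝ, s ≤ t →
      dist (if s ≤ c then f s else g s) (if t ≤ c then f t else g t) ≤ K * dist s t := by
    intro s t hst
    by_cases hs : s ≤ c <;> by_cases ht : t ≤ c
    · simp only [if_pos hs, if_pos ht]; exact hK1 s t
    · simp only [if_pos hs, if_neg ht]
      calc dist (f s) (g t) ≤ dist (f s) (f c) + dist (f c) (g t) := dist_triangle _ _ _
        _ = dist (f s) (f c) + dist (g c) (g t) := by rw [hc]
        _ ≤ K * dist s c + K * dist c t := add_le_add (hK1 s c) (hK2 c t)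
        _ = K * (dist s c + dist c t) := by ring
        _ = K * dist s t := by
            rw [Real.dist_eq, Real.dist_eq, Real.dist_eq]
            rw [abs_of_nonpos (by linarith), abs_of_nonpos (by linarith [le_of_not_ge ht]),
              abs_of_nonpos (by linarith)]
            ring
    · exact absurd (hst.trans ht) hs
    · simp only [if_neg hs, if_neg ht]; exact hK2 s t
  intro s t
  rcases le_total s t with h | h
  · exact main s t h
  · rw [dist_comm, dist_comm s t]; exact main t s h

lemma energy_cl (S : SupSetup d) (lam : ℝ) (γ : ℝ → Euc d) :
    energy S lam (γ ∘ cl) = energy S lam γ := by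
  unfold energy
  apply setIntegral_congr_fun measurableSet_Ioo
  intro t ht
  show Lfun S lam ((γ ∘ cl) t) (deriv (γ ∘ cl) t) = Lfun S lam (γ t) (deriv γ t)
  have hev : (γ ∘ cl) =ᶠ[nhds t] γ := Filter.eventuallyEq_of_mem (isOpen_Ioo.mem_nhds ht)
    (fun s hs => by simp [Function.comp, cl_eq_self (Ioo_subset_Icc_self hs)])
  rw [hev.deriv_eq, Function.comp_apply, cl_eq_self (Ioo_subset_Icc_self ht)]

lemma pdist_le_seg (S : SupSetup d) {lam : ℝ} (hlam : 0 ≤ lam)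
    {M : ℝ} (hM : ∀ x ∈ S.Ω, ∀ p : Euc d, S.H x p ≤ lam → ‖p‖ ≤ M)
    {x₀ : Euc d} {ε : ℝ} (hball : Metric.ball x₀ ε ⊆ S.Ω)
    {a b : Euc d} (ha : a ∈ Metric.ball x₀ ε) (hb : b ∈ Metric.ball x₀ ε) :
    pdist S lam a b ≤ ENNReal.ofReal (M * ‖b - a‖) := by
  set γ : ℝ → Euc d := fun t => a + cl t • (b - a) with hγdef
  have hmem : ∀ t : ℝ, γ t ∈ Metric.ball x₀ ε := fun t =>
    (convex_ball x₀ ε).add_smul_sub_mem ha hb (cl_mem t)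
  have hlip : LipschitzWith ‖b - a‖₊ γ := by
    rw [lipschitzWith_iff_dist_le_mul]
    intro s t
    have hsub : γ s - γ t = (cl s - cl t) • (b - a) := by
      simp only [hγdef, sub_smul]; abel
    rw [dist_eq_norm, hsub, norm_smul, Real.norm_eq_abs, Real.dist_eq, coe_nnnorm, mul_comm]
    exact mul_le_mul_of_nonneg_left (cl_lipschitz.dist_le_mul s t |>.trans
      (by rw [NNReal.coe_one, one_mul, Real.dist_eq])) (norm_nonneg _)
  have hγ0 : γ 0 = a := by
    simp [hγdef, cl_eq_self (show (0:ℝ) ∈ Icc (0:ℝ) 1 by norm_num)]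
  have hγ1 : γ 1 = b := by
    simp [hγdef, cl_eq_self (show (1:ℝ) ∈ Icc (0:ℝ) 1 by norm_num)]
  have hderiv : ∀ t ∈ Ioo (0:ℝ) 1, deriv γ t = b - a := by
    intro t ht
    have hev : γ =ᶠ[nhds t] fun s => a + s • (b - a) :=
      Filter.eventuallyEq_of_mem (isOpen_Ioo.mem_nhds ht)
        (fun s hs => by simp [hγdef, cl_eq_self (Ioo_subset_Icc_self hs)])
    rw [hev.deriv_eq]
    have := (((hasDerivAt_id t).smul_const (b - a)).const_add a).deriv
    simpa using this
  have hE : energy S lam γ ≤ M * ‖b - a‖ := by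
    have key : ∀ᵐ t ∂(volume : Measure ℝ), t ∈ Ioo (0:ℝ) 1 →
        ‖Lfun S lam (γ t) (deriv γ t)‖ ≤ M * ‖b - a‖ := by
      refine Filter.Eventually.of_forall fun t ht => ?_
      rw [hderiv t ht]
      have hmem' : γ t ∈ S.Ω := hball (hmem t)
      have h := lfun_mem_Icc S hlam hmem' (hM _ hmem') (b - a)
      rw [Real.norm_eq_abs, abs_of_nonneg h.1]
      exact h.2
    have hnorm := norm_setIntegral_le_of_norm_le_const_ae'
      (by rw [Real.volume_Ioo]; exact ENNReal.ofReal_lt_top) key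
    calc energy S lam γ ≤ ‖∫ t in Ioo (0:ℝ) 1, Lfun S lam (γ t) (deriv γ t)‖ := by
          rw [Real.norm_eq_abs]; exact le_abs_self _
      _ ≤ (M * ‖b - a‖) * (volume (Ioo (0:ℝ) 1)).toReal := hnorm
      _ = M * ‖b - a‖ := by rw [Real.volume_Ioo]; norm_num
  calc pdist S lam a b ≤ ENNReal.ofReal (energy S lam γ) :=
        iInf₂_le γ ⟨⟨_, hlip⟩, fun t _ => hball (hmem t), hγ0, hγ1⟩
    _ ≤ _ := ENNReal.ofReal_le_ofReal hE

lemma energy_concat_le (S : SupSetup d) {lam : ℝ} (hlam : 0 ≤ lam)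
    {x y z : Euc d} {γ₁ γ₂ : ℝ → Euc d}
    (h₁ : IsPathIn S.Ω x z γ₁) (h₂ : IsPathIn S.Ω z y γ₂) :
    pdist S lam x y ≤ ENNReal.ofReal (energy S lam γ₁) + ENNReal.ofReal (energy S lam γ₂) := by
  obtain ⟨⟨K₁, hK₁⟩, hm₁, he₁0, he₁1⟩ := h₁
  obtain ⟨⟨K₂, hK₂⟩, hm₂, he₂0, he₂1⟩ := h₂
  set g₁ : ℝ → Euc d := γ₁ ∘ cl with hg₁def
  set g₂ : ℝ → Euc d := γ₂ ∘ cl with hg₂def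
  have hg₁lip : LipschitzWith K₁ g₁ := by simpa using hK₁.comp cl_lipschitz
  have hg₂lip : LipschitzWith K₂ g₂ := by simpa using hK₂.comp cl_lipschitz
  have hg₁mem : ∀ t : ℝ, g₁ t ∈ S.Ω := fun t => hm₁ _ (cl_mem t)
  have hg₂mem : ∀ t : ℝ, g₂ t ∈ S.Ω := fun t => hm₂ _ (cl_mem t)
  have hg₁0 : g₁ 0 = x := by
    rw [hg₁def, Function.comp_apply, cl_eq_self (by norm_num : (0:ℝ) ∈ Icc (0:ℝ) 1), he₁0]
  have hg₁1 : g₁ 1 = z := by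
    rw [hg₁def, Function.comp_apply, cl_eq_self (by norm_num : (1:ℝ) ∈ Icc (0:ℝ) 1), he₁1]
  have hg₂0 : g₂ 0 = z := by
    rw [hg₂def, Function.comp_apply, cl_eq_self (by norm_num : (0:ℝ) ∈ Icc (0:ℝ) 1), he₂0]
  have hg₂1 : g₂ 1 = y := by
    rw [hg₂def, Function.comp_apply, cl_eq_self (by norm_num : (1:ℝ) ∈ Icc (0:ℝ) 1), he₂1]
  set κ : ℝ → Euc d := fun t => if t ≤ (2⁻¹:ℝ) then g₁ (2 * t + 0) else g₂ (2 * t + (-1)) with hκdef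
  -- path properties
  have hκ0 : κ 0 = x := by
    simp only [hκdef]; simp only [if_pos (by norm_num : (0:ℝ) ≤ 2⁻¹)]; norm_num [hg₁0]
  have hκ1 : κ 1 = y := by
    simp only [hκdef]; simp only [if_neg (by norm_num : ¬(1:ℝ) ≤ 2⁻¹)]; norm_num [hg₂1]
  have hκmem : ∀ t : ℝ, κ t ∈ S.Ω := by
    intro t; simp only [hκdef]
    by_cases h : t ≤ (2⁻¹:ℝ)
    · rw [if_pos h]; exact hg₁mem _
    · rw [if_neg h]; exact hg₂mem _
  have hlipL : LipschitzWith (2 * K₁) (fun t : ℝ => g₁ (2 * t + 0)) := by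
    have h2 : LipschitzWith 2 (fun t : ℝ => 2 * t + 0) := by
      rw [lipschitzWith_iff_dist_le_mul]
      intro s t
      rw [Real.dist_eq, Real.dist_eq]
      have : (2 * s + 0) - (2 * t + 0) = 2 * (s - t) := by ring
      rw [this, abs_mul]
      norm_num
    simpa [mul_comm, Function.comp_def] using hg₁lip.comp h2
  have hlipR : LipschitzWith (2 * K₂) (fun t : ℝ => g₂ (2 * t + (-1))) := by
    have h2 : LipschitzWith 2 (fun t : ℝ => 2 * t + (-1)) := by
      rw [lipschitzWith_iff_dist_le_mul]
      intro s t
      rw [Real.dist_eq, Real.dist_eq]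
      have : (2 * s + (-1)) - (2 * t + (-1)) = 2 * (s - t) := by ring
      rw [this, abs_mul]
      norm_num
    simpa [mul_comm, Function.comp_def] using hg₂lip.comp h2
  have hmatch : (fun t : ℝ => g₁ (2 * t + 0)) (2⁻¹:ℝ) = (fun t : ℝ => g₂ (2 * t + (-1))) (2⁻¹:ℝ) := by
    norm_num [hg₁1, hg₂0]
  have hκlip : LipschitzWith (max (2 * K₁) (2 * K₂)) κ := lipschitz_glue hlipL hlipR hmatch
  have hκpath : IsPathIn S.Ω x y κ := ⟨⟨_, hκlip⟩, fun t _ => hκmem t, hκ0, hκ1⟩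
  -- energy computation
  set F : ℝ → ℝ := fun t => Lfun S lam (κ t) (deriv κ t) with hFdef
  set f₁ : ℝ → ℝ := fun s => Lfun S lam (g₁ s) (deriv g₁ s) with hf₁def
  set f₂ : ℝ → ℝ := fun s => Lfun S lam (g₂ s) (deriv g₂ s) with hf₂def
  have claimA : ∀ t ∈ Ioo (0:ℝ) 2⁻¹, F t = 2 * f₁ (2 * t + 0) := by
    intro t ht
    have hev : κ =ᶠ[nhds t] fun s => g₁ (2 * s + 0) :=
      Filter.eventuallyEq_of_mem (Iio_mem_nhds ht.2)
        (fun s hs => by simp only [hκdef]; exact if_pos (le_of_lt hs))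
    have hd : deriv κ t = (2:ℝ) • deriv g₁ (2 * t + 0) := by
      rw [hev.deriv_eq]; exact deriv_comp_affine g₁ two_ne_zero 0 t
    have hκt : κ t = g₁ (2 * t + 0) := by simp only [hκdef]; exact if_pos (le_of_lt ht.2)
    rw [hFdef]
    simp only []
    rw [hκt, hd, lfun_smul S lam _ (by norm_num : (0:ℝ) ≤ 2)]
  have claimB : ∀ t ∈ Ioo (2⁻¹:ℝ) 1, F t = 2 * f₂ (2 * t + (-1)) := by
    intro t ht
    have hev : κ =ᶠ[nhds t] fun s => g₂ (2 * s + (-1)) :=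
      Filter.eventuallyEq_of_mem (Ioi_mem_nhds ht.1)
        (fun s hs => by simp only [hκdef]; exact if_neg (not_le.mpr hs))
    have hd : deriv κ t = (2:ℝ) • deriv g₂ (2 * t + (-1)) := by
      rw [hev.deriv_eq]; exact deriv_comp_affine g₂ two_ne_zero (-1) t
    have hκt : κ t = g₂ (2 * t + (-1)) := by simp only [hκdef]; exact if_neg (not_le.mpr ht.1)
    rw [hFdef]
    simp only []
    rw [hκt, hd, lfun_smul S lam _ (by norm_num : (0:ℝ) ≤ 2)]
  have intA : ∫ t in Ioo (0:ℝ) 2⁻¹, F t = energy S lam g₁ := by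
    rw [setIntegral_congr_fun measurableSet_Ioo claimA, ← integral_indicator measurableSet_Ioo]
    have hind : (Ioo (0:ℝ) 2⁻¹).indicator (fun t => 2 * f₁ (2 * t + 0))
        = fun t => 2 * (Ioo (0:ℝ) 1).indicator f₁ (2 * t) := by
      funext t
      by_cases h : t ∈ Ioo (0:ℝ) 2⁻¹
      · have h2 : 2 * t ∈ Ioo (0:ℝ) 1 := ⟨by linarith [h.1], by linarith [h.2]⟩
        rw [Set.indicator_of_mem h, Set.indicator_of_mem h2, add_zero]
      · have h2 : (2:ℝ) * t ∉ Ioo (0:ℝ) 1 := by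
          simp only [mem_Ioo, not_and_or, not_lt] at h ⊢
          rcases h with h | h
          · left; linarith
          · right; linarith
        rw [Set.indicator_of_notMem h, Set.indicator_of_notMem h2, mul_zero]
    rw [hind, MeasureTheory.integral_const_mul,
      Measure.integral_comp_mul_left ((Ioo (0:ℝ) 1).indicator f₁) 2,
      integral_indicator measurableSet_Ioo]
    rw [show |(2:ℝ)⁻¹| = 2⁻¹ by norm_num, smul_eq_mul]
    rw [energy]
    ring
  have intB : ∫ t in Ioo (2⁻¹:ℝ) 1, F t = energy S lam g₂ := by
    rw [setIntegral_congr_fun measurableSet_Ioo claimB, ← integral_indicator measurableSet_Ioo]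
    have hind : (Ioo (2⁻¹:ℝ) 1).indicator (fun t => 2 * f₂ (2 * t + (-1)))
        = fun t => 2 * (Ioo (0:ℝ) 1).indicator f₂ (2 * t + (-1)) := by
      funext t
      by_cases h : t ∈ Ioo (2⁻¹:ℝ) 1
      · have h2 : 2 * t + (-1) ∈ Ioo (0:ℝ) 1 := ⟨by linarith [h.1], by linarith [h.2]⟩
        rw [Set.indicator_of_mem h, Set.indicator_of_mem h2]
      · have h2 : (2:ℝ) * t + (-1) ∉ Ioo (0:ℝ) 1 := by
          simp only [mem_Ioo, not_and_or, not_lt] at h ⊢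
          rcases h with h | h
          · left; linarith
          · right; linarith
        rw [Set.indicator_of_notMem h, Set.indicator_of_notMem h2, mul_zero]
    have hcomp : ∫ t : ℝ, (Ioo (0:ℝ) 1).indicator f₂ (2 * t + (-1))
        = |(2:ℝ)⁻¹| • ∫ s : ℝ, (Ioo (0:ℝ) 1).indicator f₂ (s + (-1)) :=
      Measure.integral_comp_mul_left (fun s => (Ioo (0:ℝ) 1).indicator f₂ (s + (-1))) 2
    rw [hind, MeasureTheory.integral_const_mul]
    rw [show (fun t : ℝ => (Ioo (0:ℝ) 1).indicator f₂ (2 * t + (-1)))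
        = fun t : ℝ => (fun s => (Ioo (0:ℝ) 1).indicator f₂ (s + (-1))) (2 * t) from rfl]
    rw [Measure.integral_comp_mul_left (fun s => (Ioo (0:ℝ) 1).indicator f₂ (s + (-1))) 2]
    rw [integral_add_right_eq_self ((Ioo (0:ℝ) 1).indicator f₂) (-1),
      integral_indicator measurableSet_Ioo]
    rw [show |(2:ℝ)⁻¹| = 2⁻¹ by norm_num, smul_eq_mul]
    rw [energy]
    ring
  have hg₁energy : energy S lam g₁ = energy S lam γ₁ := energy_cl S lam γ₁
  have hg₂energy : energy S lam g₂ = energy S lam γ₂ := energy_cl S lam γ₂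
  have hstep : pdist S lam x y ≤ ENNReal.ofReal (energy S lam κ) :=
    iInf₂_le κ hκpath
  refine hstep.trans ?_
  by_cases hInt : IntegrableOn F (Ioo (0:ℝ) 1) volume
  · have hsplit : energy S lam κ = energy S lam γ₁ + energy S lam γ₂ := by
      have hun : Ioo (0:ℝ) 1 = Ioo (0:ℝ) 2⁻¹ ∪ Ico (2⁻¹:ℝ) 1 :=
        (Set.Ioo_union_Ico_eq_Ioo (by norm_num) (by norm_num)).symm
      have hdisj : Disjoint (Ioo (0:ℝ) 2⁻¹) (Ico (2⁻¹:ℝ) 1) :=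
        Set.disjoint_left.mpr fun t h1 h2 => absurd h2.1 (not_le.mpr h1.2)
      have hIA : IntegrableOn F (Ioo (0:ℝ) 2⁻¹) volume :=
        hInt.mono_set (Set.Ioo_subset_Ioo le_rfl (by norm_num))
      have hIB : IntegrableOn F (Ico (2⁻¹:ℝ) 1) volume :=
        hInt.mono_set (fun t ht => ⟨lt_of_lt_of_le (by norm_num) ht.1, ht.2⟩)
      have : energy S lam κ = (∫ t in Ioo (0:ℝ) 2⁻¹, F t) + ∫ t in Ico (2⁻¹:ℝ) 1, F t := by
        rw [energy]
        rw [show (∫ t in Ioo (0:ℝ) 1, Lfun S lam (κ t) (deriv κ t)) = ∫ t in Ioo (0:ℝ) 1, F t from rfl]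
        rw [hun, setIntegral_union hdisj measurableSet_Ico hIA hIB]
      rw [this, (setIntegral_congr_set Ioo_ae_eq_Ico).symm, intA, intB, hg₁energy, hg₂energy]
    rw [hsplit]
    exact ENNReal.ofReal_add_le
  · have : energy S lam κ = 0 := integral_undef hInt
    rw [this, ENNReal.ofReal_zero]
    exact zero_le

lemma pdist_triangle (S : SupSetup d) {lam : ℝ} (hlam : 0 ≤ lam) (x y z : Euc d) :
    pdist S lam x y ≤ pdist S lam x z + pdist S lam z y := by
  conv_rhs => rw [pdist, pdist]
  rw [ENNReal.iInf_add]
  refine le_iInf fun γ₁ => ?_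
  rw [ENNReal.iInf_add]
  refine le_iInf fun h₁ => ?_
  rw [ENNReal.add_iInf]
  refine le_iInf fun γ₂ => ?_
  rw [ENNReal.add_iInf]
  refine le_iInf fun h₂ => ?_
  exact energy_concat_le S hlam h₁ h₂

end Stmt3Aux
end Stmt3Aux

/-- for every `λ ≥ 0`, `(x,y) ↦ d_λ(x,y)` is continuous on `Ω × Ω`. -/
theorem stmt3 {d : ℕ} (S : SupSetup d) (lam : ℝ) (hlam : 0 ≤ lam) :
    ContinuousOn (fun z : Euc d × Euc d => pdist S lam z.1 z.2) (S.Ω ×ˢ S.Ω) := by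
  obtain ⟨M, hM0, hM⟩ := S.H_coercive lam
  rintro ⟨x₀, y₀⟩ ⟨hx₀, hy₀⟩
  obtain ⟨ε₁, hε₁, hb₁⟩ := Metric.isOpen_iff.1 S.isOpen_Ω x₀ hx₀
  obtain ⟨ε₂, hε₂, hb₂⟩ := Metric.isOpen_iff.1 S.isOpen_Ω y₀ hy₀
  set D := pdist S lam x₀ y₀ with hD
  have keyU : ∀ x ∈ Metric.ball x₀ ε₁, ∀ y ∈ Metric.ball y₀ ε₂,
      pdist S lam x y ≤ ENNReal.ofReal (M * ‖x - x₀‖) + ENNReal.ofReal (M * ‖y - y₀‖) + D := by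
    intro x hx y hy
    have t1 : pdist S lam x y ≤ pdist S lam x x₀ + pdist S lam x₀ y :=
      Stmt3Aux.pdist_triangle S hlam x y x₀
    have t2 : pdist S lam x₀ y ≤ pdist S lam x₀ y₀ + pdist S lam y₀ y :=
      Stmt3Aux.pdist_triangle S hlam x₀ y y₀
    have s1 : pdist S lam x x₀ ≤ ENNReal.ofReal (M * ‖x - x₀‖) := by
      have := Stmt3Aux.pdist_le_seg S hlam hM hb₁ hx (Metric.mem_ball_self hε₁)
      simpa [norm_sub_rev] using this
    have s2 : pdist S lam y₀ y ≤ ENNReal.ofReal (M * ‖y - y₀‖) :=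
      Stmt3Aux.pdist_le_seg S hlam hM hb₂ (Metric.mem_ball_self hε₂) hy
    calc pdist S lam x y ≤ pdist S lam x x₀ + (pdist S lam x₀ y₀ + pdist S lam y₀ y) :=
          t1.trans (add_le_add_right t2 _)
      _ ≤ ENNReal.ofReal (M * ‖x - x₀‖) + (D + ENNReal.ofReal (M * ‖y - y₀‖)) :=
          add_le_add s1 (add_le_add_right s2 _)
      _ = _ := by ring
  have keyL : ∀ x ∈ Metric.ball x₀ ε₁, ∀ y ∈ Metric.ball y₀ ε₂,
      D ≤ ENNReal.ofReal (M * ‖x - x₀‖) + ENNReal.ofReal (M * ‖y - y₀‖) + pdist S lam x y := by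
    intro x hx y hy
    have t1 : D ≤ pdist S lam x₀ x + pdist S lam x y₀ :=
      Stmt3Aux.pdist_triangle S hlam x₀ y₀ x
    have t2 : pdist S lam x y₀ ≤ pdist S lam x y + pdist S lam y y₀ :=
      Stmt3Aux.pdist_triangle S hlam x y₀ y
    have s1 : pdist S lam x₀ x ≤ ENNReal.ofReal (M * ‖x - x₀‖) :=
      Stmt3Aux.pdist_le_seg S hlam hM hb₁ (Metric.mem_ball_self hε₁) hx
    have s2 : pdist S lam y y₀ ≤ ENNReal.ofReal (M * ‖y - y₀‖) := by
      have := Stmt3Aux.pdist_le_seg S hlam hM hb₂ hy (Metric.mem_ball_self hε₂)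
      simpa [norm_sub_rev] using this
    calc D ≤ pdist S lam x₀ x + (pdist S lam x y + pdist S lam y y₀) :=
          t1.trans (add_le_add_right t2 _)
      _ ≤ ENNReal.ofReal (M * ‖x - x₀‖) + (pdist S lam x y + ENNReal.ofReal (M * ‖y - y₀‖)) :=
          add_le_add s1 (add_le_add_right s2 _)
      _ = _ := by ring
  have hmain : Tendsto (fun z : Euc d × Euc d => pdist S lam z.1 z.2) (𝓝 (x₀, y₀)) (𝓝 D) := by
    by_cases hDtop : D = ⊤
    · have hev : ∀ᶠ z : Euc d × Euc d in 𝓝 (x₀, y₀), pdist S lam z.1 z.2 = ⊤ := by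
        have hm : Metric.ball x₀ ε₁ ×ˢ Metric.ball y₀ ε₂ ∈ 𝓝 (x₀, y₀) :=
          prod_mem_nhds (Metric.ball_mem_nhds _ hε₁) (Metric.ball_mem_nhds _ hε₂)
        filter_upwards [hm] with z hz
        by_contra hne
        have hfin : pdist S lam z.1 z.2 < ⊤ := lt_top_iff_ne_top.mpr hne
        have hle := keyL z.1 hz.1 z.2 hz.2
        rw [hDtop] at hle
        have hltop : ENNReal.ofReal (M * ‖z.1 - x₀‖) + ENNReal.ofReal (M * ‖z.2 - y₀‖)
            + pdist S lam z.1 z.2 < ⊤ :=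
          ENNReal.add_lt_top.mpr ⟨ENNReal.add_lt_top.mpr
            ⟨ENNReal.ofReal_lt_top, ENNReal.ofReal_lt_top⟩, hfin⟩
        exact absurd (lt_of_le_of_lt hle hltop) (lt_irrefl _)
      rw [hDtop]
      exact Tendsto.congr' (by filter_upwards [hev] with z hz; exact hz.symm) tendsto_const_nhds
    · rw [ENNReal.tendsto_nhds hDtop]
      intro ε hε
      set ε' : ℝ≥0∞ := min ε 1 with hε'
      have hε'0 : 0 < ε' := lt_min hε zero_lt_one
      have hε'top : ε' ≠ ⊤ :=
        (lt_of_le_of_lt (min_le_right ε 1) (by norm_num : (1:ℝ≥0∞) < ⊤)).ne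
      set r : ℝ := ε'.toReal / (2 * (M + 1)) with hr
      have hrpos : 0 < r := div_pos (ENNReal.toReal_pos hε'0.ne' hε'top) (by linarith)
      have hball : Metric.ball x₀ (min ε₁ r) ×ˢ Metric.ball y₀ (min ε₂ r) ∈ 𝓝 (x₀, y₀) :=
        prod_mem_nhds (Metric.ball_mem_nhds _ (lt_min hε₁ hrpos))
          (Metric.ball_mem_nhds _ (lt_min hε₂ hrpos))
      filter_upwards [hball] with z hz
      obtain ⟨x, y⟩ := z
      have hx1 : x ∈ Metric.ball x₀ ε₁ := Metric.ball_subset_ball (min_le_left _ _) hz.1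
      have hy1 : y ∈ Metric.ball y₀ ε₂ := Metric.ball_subset_ball (min_le_left _ _) hz.2
      have hxr : ‖x - x₀‖ < r := by
        have h := hz.1
        rw [Metric.mem_ball, dist_eq_norm] at h
        exact lt_of_lt_of_le h (min_le_right _ _)
      have hyr : ‖y - y₀‖ < r := by
        have h := hz.2
        rw [Metric.mem_ball, dist_eq_norm] at h
        exact lt_of_lt_of_le h (min_le_right _ _)
      have hcalc : M * r + M * r ≤ ε'.toReal := by
        have hrr : r * (2 * (M + 1)) = ε'.toReal := div_mul_cancel₀ _ (by linarith)
        nlinarith [hrpos.le, hM0]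
      have hsum : ENNReal.ofReal (M * ‖x - x₀‖) + ENNReal.ofReal (M * ‖y - y₀‖) ≤ ε' := by
        calc ENNReal.ofReal (M * ‖x - x₀‖) + ENNReal.ofReal (M * ‖y - y₀‖)
            ≤ ENNReal.ofReal (M * r) + ENNReal.ofReal (M * r) :=
              add_le_add (ENNReal.ofReal_le_ofReal
                  (mul_le_mul_of_nonneg_left hxr.le hM0))
                (ENNReal.ofReal_le_ofReal (mul_le_mul_of_nonneg_left hyr.le hM0))
          _ = ENNReal.ofReal (M * r + M * r) :=
              (ENNReal.ofReal_add (by positivity) (by positivity)).symm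
          _ ≤ ENNReal.ofReal ε'.toReal := ENNReal.ofReal_le_ofReal hcalc
          _ = ε' := ENNReal.ofReal_toReal hε'top
      constructor
      · have hle : D ≤ pdist S lam x y + ε' := by
          calc D ≤ ENNReal.ofReal (M * ‖x - x₀‖) + ENNReal.ofReal (M * ‖y - y₀‖)
                + pdist S lam x y := keyL x hx1 y hy1
            _ ≤ ε' + pdist S lam x y := add_le_add_left hsum _
            _ = pdist S lam x y + ε' := add_comm _ _
        have h1 : D - ε' ≤ pdist S lam x y := tsub_le_iff_right.mpr hle
        exact le_trans (tsub_le_tsub_left (min_le_left ε 1) D) h1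
      · have hle : pdist S lam x y ≤ D + ε' := by
          calc pdist S lam x y ≤ ENNReal.ofReal (M * ‖x - x₀‖)
                + ENNReal.ofReal (M * ‖y - y₀‖) + D := keyU x hx1 y hy1
            _ ≤ ε' + D := add_le_add_left hsum _
            _ = D + ε' := add_comm _ _
        exact hle.trans (add_le_add_right (min_le_left ε 1) D)
  exact hmain.mono_left nhdsWithin_le_nhds
end

section
/- Let λ ≥ 0 and let u ∈ W^{1,∞}(Ω) ∩ C(Ω) with a.e. gradient Du. Then H(x, Du(x)) ≤ λ for a.e. x ∈ Ω if and only if u(y) − u(x) ≤ d_λ(x, y) for all x, y ∈ Ω. Moreover, if in addition u is continuous on cl(Ω) and H(x, Du(x)) ≤ λ a.e. in Ω, then u(y) − u(x) ≤ d_λ(x, y) holds for all x, y ∈ cl(Ω). -/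
open Set Filter Topology MeasureTheory
open scoped Pointwise ENNReal

section Aux
open Metric
variable {d : ℕ}

lemma zero_mem_K {S : SupSetup d} {lam : ℝ} (hlam : 0 ≤ lam) {x : Euc d} (hx : x ∈ S.Ω) :
    (0 : Euc d) ∈ {p : Euc d | S.H x p ≤ lam} := by
  simp only [mem_setOf_eq, S.H_zero x hx]; exact hlam

lemma bddAbove_K {S : SupSetup d} {lam M : ℝ}
    (hM : ∀ x ∈ S.Ω, ∀ p : Euc d, S.H x p ≤ lam → ‖p‖ ≤ M)
    {x : Euc d} (hx : x ∈ S.Ω) (q : Euc d) :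
    BddAbove ((fun p : Euc d => (inner ℝ p q : ℝ)) '' {p : Euc d | S.H x p ≤ lam}) := by
  refine ⟨M * ‖q‖, ?_⟩
  rintro r ⟨p, hp, rfl⟩
  calc (inner ℝ p q : ℝ) ≤ ‖p‖ * ‖q‖ := real_inner_le_norm p q
    _ ≤ M * ‖q‖ := by
      have := hM x hx p hp
      exact mul_le_mul_of_nonneg_right this (norm_nonneg q)

lemma K_img_nonempty {S : SupSetup d} {lam : ℝ} (hlam : 0 ≤ lam) {x : Euc d} (hx : x ∈ S.Ω)
    (q : Euc d) :
    ((fun p : Euc d => (inner ℝ p q : ℝ)) '' {p : Euc d | S.H x p ≤ lam}).Nonempty :=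
  ⟨(inner ℝ (0:Euc d) q : ℝ), ⟨0, zero_mem_K hlam hx, rfl⟩⟩

lemma Lfun_nonneg {S : SupSetup d} {lam : ℝ} (hlam : 0 ≤ lam) {M : ℝ}
    (hM : ∀ x ∈ S.Ω, ∀ p : Euc d, S.H x p ≤ lam → ‖p‖ ≤ M)
    {x : Euc d} (hx : x ∈ S.Ω) (q : Euc d) : 0 ≤ Lfun S lam x q := by
  have h0 : (0:ℝ) ∈ (fun p : Euc d => (inner ℝ p q : ℝ)) '' {p : Euc d | S.H x p ≤ lam} :=
    ⟨0, zero_mem_K hlam hx, by simp⟩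
  exact le_csSup (bddAbove_K hM hx q) h0

lemma inner_le_Lfun {S : SupSetup d} {lam M : ℝ}
    (hM : ∀ x ∈ S.Ω, ∀ p : Euc d, S.H x p ≤ lam → ‖p‖ ≤ M)
    {x : Euc d} (hx : x ∈ S.Ω) {p : Euc d} (hp : S.H x p ≤ lam) (q : Euc d) :
    (inner ℝ p q : ℝ) ≤ Lfun S lam x q :=
  le_csSup (bddAbove_K hM hx q) ⟨p, hp, rfl⟩

lemma Lfun_le {S : SupSetup d} {lam : ℝ} (hlam : 0 ≤ lam) {M : ℝ}
    (hM : ∀ x ∈ S.Ω, ∀ p : Euc d, S.H x p ≤ lam → ‖p‖ ≤ M)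
    {x : Euc d} (hx : x ∈ S.Ω) (q : Euc d) : Lfun S lam x q ≤ M * ‖q‖ := by
  apply csSup_le (K_img_nonempty hlam hx q)
  rintro r ⟨p, hp, rfl⟩
  calc (inner ℝ p q : ℝ) ≤ ‖p‖ * ‖q‖ := real_inner_le_norm p q
    _ ≤ M * ‖q‖ := mul_le_mul_of_nonneg_right (hM x hx p hp) (norm_nonneg q)

lemma Lfun_lip_q {S : SupSetup d} {lam : ℝ} (hlam : 0 ≤ lam) {M : ℝ}
    (hM : ∀ x ∈ S.Ω, ∀ p : Euc d, S.H x p ≤ lam → ‖p‖ ≤ M)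
    {x : Euc d} (hx : x ∈ S.Ω) (q q' : Euc d) :
    Lfun S lam x q' ≤ Lfun S lam x q + M * ‖q' - q‖ := by
  apply csSup_le (K_img_nonempty hlam hx q')
  rintro r ⟨p, hp, rfl⟩
  show (inner ℝ p q' : ℝ) ≤ _
  have h1 : (inner ℝ p q' : ℝ) = (inner ℝ p q : ℝ) + (inner ℝ p (q' - q) : ℝ) := by
    rw [← inner_add_right]; norm_num
  rw [h1]
  have h2 : (inner ℝ p (q' - q) : ℝ) ≤ M * ‖q' - q‖ :=
    le_trans (real_inner_le_norm _ _)
      (mul_le_mul_of_nonneg_right (hM x hx p hp) (norm_nonneg _))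
  exact add_le_add (inner_le_Lfun hM hx hp q) h2

lemma Lfun_smul {S : SupSetup d} {lam : ℝ} (hlam : 0 ≤ lam) {M : ℝ}
    (hM : ∀ x ∈ S.Ω, ∀ p : Euc d, S.H x p ≤ lam → ‖p‖ ≤ M)
    {x : Euc d} (hx : x ∈ S.Ω) {c : ℝ} (hc : 0 ≤ c) (q : Euc d) :
    Lfun S lam x (c • q) = c * Lfun S lam x q := by
  rcases eq_or_lt_of_le hc with rfl | hc
  · simp only [zero_smul, zero_mul]
    apply le_antisymm
    · apply csSup_le (K_img_nonempty hlam hx 0)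
      rintro r ⟨p, hp, rfl⟩; simp
    · exact Lfun_nonneg hlam hM hx 0
  · apply le_antisymm
    · apply csSup_le (K_img_nonempty hlam hx (c • q))
      rintro r ⟨p, hp, rfl⟩
      show (inner ℝ p (c • q) : ℝ) ≤ _
      rw [real_inner_smul_right]
      exact mul_le_mul_of_nonneg_left (inner_le_Lfun hM hx hp q) hc.le
    · rw [← le_div_iff₀' hc]
      apply csSup_le (K_img_nonempty hlam hx q)
      rintro r ⟨p, hp, rfl⟩
      show (inner ℝ p q : ℝ) ≤ _
      rw [le_div_iff₀' hc, ← real_inner_smul_right]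
      exact inner_le_Lfun hM hx hp _

lemma H_contAt {S : SupSetup d} {x p : Euc d} (hx : x ∈ S.Ω) :
    ContinuousAt (fun z : Euc d × Euc d => S.H z.1 z.2) (x, p) := by
  have hopen : IsOpen (S.Ω ×ˢ (univ : Set (Euc d))) := S.isOpen_Ω.prod isOpen_univ
  exact S.H_cont.continuousAt (hopen.mem_nhds (by simp [hx]))

lemma hemi {S : SupSetup d} {lam : ℝ} {x : Euc d} (hx : x ∈ S.Ω) {ε : ℝ} (hε : 0 < ε) :
    ∃ δ > (0:ℝ), ∀ y ∈ S.Ω, dist y x < δ → ∀ p : Euc d, S.H y p ≤ lam →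
      ∃ p' : Euc d, S.H x p' ≤ lam ∧ dist p p' ≤ ε := by
  by_contra hcon
  push_neg at hcon
  obtain ⟨M, hM0, hM⟩ := S.H_coercive lam
  have hseq : ∀ n : ℕ, ∃ y ∈ S.Ω, dist y x < 1/(n+1) ∧ ∃ p : Euc d, S.H y p ≤ lam ∧
      ∀ p' : Euc d, S.H x p' ≤ lam → ε < dist p p' := by
    intro n
    obtain ⟨y, hy, hdy, p, hp, hfar⟩ := hcon (1/(n+1)) (by positivity)
    exact ⟨y, hy, hdy, p, hp, hfar⟩
  choose y hy hdy p hp hfar using hseq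
  have hyx : Filter.Tendsto y atTop (nhds x) := by
    rw [tendsto_iff_dist_tendsto_zero]
    apply squeeze_zero (fun n => dist_nonneg) (fun n => (hdy n).le)
    exact tendsto_one_div_add_atTop_nhds_zero_nat
  have hpball : ∀ n, p n ∈ Metric.closedBall (0 : Euc d) M := by
    intro n
    simpa [Metric.mem_closedBall, dist_zero_right] using hM (y n) (hy n) (p n) (hp n)
  obtain ⟨q, hq, φ, hφmono, hφ⟩ :=
    (isCompact_closedBall (0:Euc d) M).tendsto_subseq hpball
  have hpair : Filter.Tendsto (fun n => (y (φ n), p (φ n))) atTop (nhds (x, q)) :=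
    ((hyx.comp hφmono.tendsto_atTop).prodMk_nhds hφ)
  have hHq : S.H x q ≤ lam := by
    have := ((H_contAt (p := q) hx).tendsto.comp hpair)
    exact le_of_tendsto this (Filter.Eventually.of_forall (fun n => hp (φ n)))
  have : ∀ n, ε < dist (p (φ n)) q := fun n => hfar (φ n) q hHq
  have hd0 : Filter.Tendsto (fun n => dist (p (φ n)) q) atTop (nhds 0) :=
    tendsto_iff_dist_tendsto_zero.1 hφ
  have hε0 : ε ≤ 0 := ge_of_tendsto hd0 (Filter.Eventually.of_forall (fun n => (this n).le))
  linarith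

lemma Lfun_usc {S : SupSetup d} {lam : ℝ} (hlam : 0 ≤ lam) {M : ℝ}
    (hM : ∀ x ∈ S.Ω, ∀ p : Euc d, S.H x p ≤ lam → ‖p‖ ≤ M)
    {x : Euc d} (hx : x ∈ S.Ω) {ε : ℝ} (hε : 0 < ε) :
    ∃ δ > (0:ℝ), ∀ y ∈ S.Ω, dist y x < δ → ∀ q : Euc d,
      Lfun S lam y q ≤ Lfun S lam x q + ε * ‖q‖ := by
  obtain ⟨δ, hδ, hδ'⟩ := hemi (S := S) (lam := lam) hx hε
  refine ⟨δ, hδ, fun y hy hdy q => ?_⟩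
  apply csSup_le (K_img_nonempty hlam hy q)
  rintro r ⟨p, hp, rfl⟩
  show (inner ℝ p q : ℝ) ≤ _
  obtain ⟨p', hp', hdp⟩ := hδ' y hy hdy p hp
  have h1 : (inner ℝ p q : ℝ) = (inner ℝ p' q : ℝ) + (inner ℝ (p - p') q : ℝ) := by
    rw [← inner_add_left]; norm_num
  rw [h1]
  have h2 : (inner ℝ (p - p') q : ℝ) ≤ ε * ‖q‖ := by
    refine le_trans (real_inner_le_norm _ _) ?_
    apply mul_le_mul_of_nonneg_right _ (norm_nonneg q)
    rwa [← dist_eq_norm]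
  exact add_le_add (inner_le_Lfun hM hx hp' q) h2

lemma isOpen_Lfun_lt {S : SupSetup d} {lam : ℝ} (hlam : 0 ≤ lam) (c : ℝ) :
    IsOpen {z : Euc d × Euc d | z.1 ∈ S.Ω ∧ Lfun S lam z.1 z.2 < c} := by
  obtain ⟨M, hM0, hM⟩ := S.H_coercive lam
  rw [Metric.isOpen_iff]
  rintro ⟨x, q⟩ ⟨hx, hLfun⟩
  set ε : ℝ := (c - Lfun S lam x q) / (‖q‖ + 1 + M + 1) with hε_def
  have hden : (0:ℝ) < ‖q‖ + 1 + M + 1 := by positivity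
  have hε : 0 < ε := div_pos (by linarith) hden
  obtain ⟨δ, hδ, hδ'⟩ := Lfun_usc hlam hM hx hε
  obtain ⟨r₀, hr₀, hball⟩ := Metric.isOpen_iff.1 S.isOpen_Ω x hx
  refine ⟨min (min δ r₀) (min ε 1), by positivity, ?_⟩
  rintro ⟨y, q'⟩ hz
  rw [Metric.mem_ball, Prod.dist_eq] at hz
  have hdy : dist y x < min δ r₀ := lt_of_le_of_lt (le_max_left _ _)
    (lt_of_lt_of_le hz (min_le_left _ _))
  have hdq : dist q' q < min ε 1 := lt_of_le_of_lt (le_max_right _ _)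
    (lt_of_lt_of_le hz (min_le_right _ _))
  have hyΩ : y ∈ S.Ω := hball (Metric.mem_ball.2 (lt_of_lt_of_le hdy (min_le_right _ _)))
  refine ⟨hyΩ, ?_⟩
  have h1 : Lfun S lam y q' ≤ Lfun S lam x q' + ε * ‖q'‖ :=
    hδ' y hyΩ (lt_of_lt_of_le hdy (min_le_left _ _)) q'
  have h2 : Lfun S lam x q' ≤ Lfun S lam x q + M * ‖q' - q‖ := Lfun_lip_q hlam hM hx q q'
  have hq' : ‖q'‖ ≤ ‖q‖ + 1 := by
    have : ‖q' - q‖ < 1 := by rw [← dist_eq_norm]; exact lt_of_lt_of_le hdq (min_le_right _ _)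
    calc ‖q'‖ = ‖q + (q' - q)‖ := by rw [add_sub_cancel]
      _ ≤ ‖q‖ + ‖q' - q‖ := norm_add_le _ _
      _ ≤ ‖q‖ + 1 := by linarith
  have hqq : ‖q' - q‖ < ε := by
    rw [← dist_eq_norm]; exact lt_of_lt_of_le hdq (min_le_left _ _)
  have key : ε * (‖q‖ + 1 + M + 1) = c - Lfun S lam x q := by
    rw [hε_def, div_mul_cancel₀ _ hden.ne']
  have : Lfun S lam y q' ≤ Lfun S lam x q + ε * (‖q‖ + 1) + M * ε := by
    have hεq' : ε * ‖q'‖ ≤ ε * (‖q‖ + 1) := mul_le_mul_of_nonneg_left hq' hε.le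
    have hMq : M * ‖q' - q‖ ≤ M * ε := mul_le_mul_of_nonneg_left hqq.le hM0
    linarith
  calc Lfun S lam y q' ≤ Lfun S lam x q + ε * (‖q‖ + 1) + M * ε := this
    _ < Lfun S lam x q + ε * (‖q‖ + 1 + M + 1) := by nlinarith
    _ = c := by rw [key]; ring

open Classical in
/-- Globally defined extension of `Lfun`, measurable. -/
noncomputable def Lext (S : SupSetup d) (lam : ℝ) : Euc d × Euc d → ℝ :=
  fun z => if z.1 ∈ S.Ω then Lfun S lam z.1 z.2 else 0

lemma measurable_Lext {S : SupSetup d} {lam : ℝ} (hlam : 0 ≤ lam) :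
    Measurable (Lext S lam) := by
  apply measurable_of_Ioi
  intro c
  have hO : MeasurableSet (S.Ω ×ˢ (univ : Set (Euc d))) :=
    (S.isOpen_Ω.prod isOpen_univ).measurableSet
  have hA : ∀ b : ℝ, MeasurableSet {z : Euc d × Euc d | z.1 ∈ S.Ω ∧ Lfun S lam z.1 z.2 < b} :=
    fun b => (isOpen_Lfun_lt hlam b).measurableSet
  have hkey : {z : Euc d × Euc d | z.1 ∈ S.Ω ∧ c < Lfun S lam z.1 z.2} =
      (S.Ω ×ˢ (univ : Set (Euc d))) \ ⋂ n : ℕ,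
        {z : Euc d × Euc d | z.1 ∈ S.Ω ∧ Lfun S lam z.1 z.2 < c + 1/(n+1)} := by
    ext z
    simp only [mem_setOf_eq, mem_diff, mem_iInter, mem_prod, mem_univ, and_true]
    constructor
    · rintro ⟨hz, hc⟩
      refine ⟨hz, ?_⟩
      intro hall
      obtain ⟨n, hn⟩ := exists_nat_one_div_lt (sub_pos.2 hc)
      have := (hall n).2
      have h2 : (1:ℝ)/(n+1) < Lfun S lam z.1 z.2 - c := hn
      linarith
    · rintro ⟨hz, hnot⟩
      refine ⟨hz, ?_⟩
      by_contra hle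
      push_neg at hle
      exact hnot (fun n => ⟨hz, by
        have : (0:ℝ) < 1/(n+1) := by positivity
        linarith⟩)
  have hmeas : MeasurableSet {z : Euc d × Euc d | z.1 ∈ S.Ω ∧ c < Lfun S lam z.1 z.2} := by
    rw [hkey]; exact hO.diff (MeasurableSet.iInter (fun n => hA _))
  by_cases hc : 0 ≤ c
  · have : Lext S lam ⁻¹' Ioi c = {z : Euc d × Euc d | z.1 ∈ S.Ω ∧ c < Lfun S lam z.1 z.2} := by
      ext z
      simp only [mem_preimage, mem_Ioi, Lext, mem_setOf_eq]
      by_cases hz : z.1 ∈ S.Ω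
      · simp [hz]
      · simp only [hz, if_false, false_and, iff_false, not_lt]
        linarith
    rw [this]; exact hmeas
  · push_neg at hc
    have : Lext S lam ⁻¹' Ioi c = (S.Ω ×ˢ (univ : Set (Euc d)))ᶜ ∪
        {z : Euc d × Euc d | z.1 ∈ S.Ω ∧ c < Lfun S lam z.1 z.2} := by
      ext z
      simp only [mem_preimage, mem_Ioi, Lext, mem_union, mem_compl_iff, mem_prod, mem_univ,
        and_true, mem_setOf_eq]
      by_cases hz : z.1 ∈ S.Ω
      · simp [hz]
      · simp [hz, hc]
    rw [this]; exact hO.compl.union hmeas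

lemma norm_deriv_le_lip {E : Type*} [NormedAddCommGroup E] [NormedSpace ℝ E] {γ : ℝ → E}
    {K : NNReal} (hγ : LipschitzWith K γ) (t : ℝ) : ‖deriv γ t‖ ≤ K := by
  by_cases hd : DifferentiableAt ℝ γ t
  · have hs := hasDerivAt_iff_tendsto_slope.1 hd.hasDerivAt
    have hnorm : Filter.Tendsto (fun s => ‖slope γ t s‖) (nhdsWithin t {t}ᶜ) (nhds ‖deriv γ t‖) :=
      (continuous_norm.tendsto _).comp hs
    apply le_of_tendsto hnorm
    filter_upwards [self_mem_nhdsWithin] with s hs'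
    have hst : s ≠ t := hs'
    rw [slope_def_module, norm_smul, norm_inv]
    have hdist := hγ.dist_le_mul s t
    rw [dist_eq_norm, dist_eq_norm] at hdist
    have h1 : (0:ℝ) < |s - t| := abs_pos.2 (sub_ne_zero.2 hst)
    rw [Real.norm_eq_abs (s - t), inv_mul_le_iff₀ h1]
    calc ‖γ s - γ t‖ ≤ K * ‖s - t‖ := hdist
      _ = K * |s - t| := by rw [Real.norm_eq_abs]
      _ = |s - t| * K := mul_comm _ _
  · rw [deriv_zero_of_not_differentiableAt hd, norm_zero]
    exact K.coe_nonneg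

lemma lipschitzWith_of_locally {g : ℝ → ℝ} {C δ : ℝ} (hC : 0 ≤ C) (hδ : 0 < δ)
    (h : ∀ s t : ℝ, s ≤ t → t - s ≤ δ → |g t - g s| ≤ C * (t - s)) :
    LipschitzWith (Real.toNNReal C) g := by
  have key : ∀ n : ℕ, ∀ s t : ℝ, s ≤ t → t - s ≤ (n + 1) * δ → |g t - g s| ≤ C * (t - s) := by
    intro n
    induction n with
    | zero =>
      intro s t hst hd
      refine h s t hst ?_
      push_cast at hd; linarith
    | succ n ih =>
      intro s t hst hd
      by_cases hsmall : t - s ≤ δ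
      · exact h s t hst hsmall
      · push_neg at hsmall
        set m := t - δ with hm
        have h1 : |g t - g m| ≤ C * (t - m) := h m t (by simp [hm]; linarith) (by simp [hm])
        have h2 : |g m - g s| ≤ C * (m - s) := by
          apply ih s m (by simp [hm]; linarith)
          push_cast at hd ⊢
          simp only [hm]; linarith
        calc |g t - g s| ≤ |g t - g m| + |g m - g s| := abs_sub_le _ _ _
          _ ≤ C * (t - m) + C * (m - s) := add_le_add h1 h2
          _ = C * (t - s) := by ring
  have key2 : ∀ s t : ℝ, s ≤ t → |g t - g s| ≤ C * (t - s) := by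
    intro s t hst
    obtain ⟨n, hn⟩ := exists_nat_ge ((t - s) / δ)
    apply key n s t hst
    have : t - s ≤ n * δ := by
      rw [div_le_iff₀ hδ] at hn; linarith
    nlinarith
  apply LipschitzWith.of_dist_le_mul
  intro s t
  rw [Real.dist_eq, Real.dist_eq, Real.coe_toNNReal C hC]
  rcases le_total t s with hst | hst
  · calc |g s - g t| ≤ C * (s - t) := key2 t s hst
      _ = C * |s - t| := by rw [abs_of_nonneg (by linarith)]
  · calc |g s - g t| = |g t - g s| := abs_sub_comm _ _
      _ ≤ C * (t - s) := key2 s t hst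
      _ = C * |s - t| := by rw [abs_sub_comm, abs_of_nonneg (by linarith)]

lemma lip_ftc {g : ℝ → ℝ} {C : NNReal} (hg : LipschitzWith C g) :
    g 1 - g 0 = ∫ t in Ioo (0:ℝ) 1, deriv g t := by
  have hcont : Continuous g := hg.continuous
  set G : ℝ → ℝ := fun s => ∫ x in (0:ℝ)..s, g x with hG
  have hGd : ∀ r : ℝ, HasDerivAt G (g r) r := fun r =>
    intervalIntegral.integral_hasDerivAt_right (hcont.intervalIntegrable _ _)
      (hcont.stronglyMeasurableAtFilter _ _) hcont.continuousAt
  set hseq : ℕ → ℝ := fun n => 1 / (n + 1) with hhseq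
  have hhpos : ∀ n, 0 < hseq n := fun n => by positivity
  have hh0 : Filter.Tendsto hseq atTop (nhds 0) := tendsto_one_div_add_atTop_nhds_zero_nat
  set A : ℕ → ℝ := fun n => ∫ t in Ioo (0:ℝ) 1, (g (t + hseq n) - g t) / hseq n with hA
  -- A n in terms of G
  have hAeq : ∀ n, A n = (G (1 + hseq n) - G 1) / hseq n - (G (0 + hseq n) - G 0) / hseq n := by
    intro n
    have hint1 : IntervalIntegrable (fun t => g (t + hseq n)) volume 0 1 :=
      (hcont.comp (by continuity)).intervalIntegrable _ _
    have hint2 : IntervalIntegrable g volume 0 1 := hcont.intervalIntegrable _ _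
    have e1 : A n = ∫ t in (0:ℝ)..1, (g (t + hseq n) - g t) / hseq n := by
      rw [intervalIntegral.integral_of_le zero_le_one, integral_Ioc_eq_integral_Ioo]
    have e2 : (∫ t in (0:ℝ)..1, (g (t + hseq n) - g t) / hseq n)
        = ((∫ t in (0:ℝ)..1, g (t + hseq n)) - ∫ t in (0:ℝ)..1, g t) / hseq n := by
      rw [← intervalIntegral.integral_sub hint1 hint2]
      simp only [div_eq_inv_mul, ← intervalIntegral.integral_const_mul]
    have e3 : (∫ t in (0:ℝ)..1, g (t + hseq n)) = ∫ t in (0:ℝ) + hseq n..1 + hseq n, g t :=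
      intervalIntegral.integral_comp_add_right g (hseq n)
    have e4 : (∫ t in (0:ℝ) + hseq n..(1:ℝ) + hseq n, g t)
        = G (1 + hseq n) - G (0 + hseq n) := by
      have hab : IntervalIntegrable g volume 0 (0 + hseq n) := hcont.intervalIntegrable _ _
      have hbc : IntervalIntegrable g volume (0 + hseq n) (1 + hseq n) :=
        hcont.intervalIntegrable _ _
      have := intervalIntegral.integral_add_adjacent_intervals hab hbc
      simp only [hG]
      linarith [this]
    have e5 : G 0 = 0 := by simp [hG]
    have e6 : G 1 = ∫ t in (0:ℝ)..1, g t := rfl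
    rw [e1, e2, e3, e4, e5, e6]
    ring
  -- limit of A via G
  have hlim1 : Filter.Tendsto A atTop (nhds (g 1 - g 0)) := by
    have hs1 : Filter.Tendsto (fun n => (1:ℝ) + hseq n) atTop (nhdsWithin 1 {(1:ℝ)}ᶜ) := by
      apply tendsto_nhdsWithin_of_tendsto_nhds_of_eventually_within
      · simpa using (tendsto_const_nhds.add hh0)
      · exact Filter.Eventually.of_forall (fun n => by
          simp only [mem_compl_iff, mem_singleton_iff]
          have := hhpos n; intro hcontra; nlinarith [hcontra])
    have hs0 : Filter.Tendsto (fun n => (0:ℝ) + hseq n) atTop (nhdsWithin 0 {(0:ℝ)}ᶜ) := by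
      apply tendsto_nhdsWithin_of_tendsto_nhds_of_eventually_within
      · simpa using hh0
      · exact Filter.Eventually.of_forall (fun n => by
          simp only [mem_compl_iff, mem_singleton_iff]
          have := hhpos n; intro hcontra; nlinarith [hcontra])
    have hT1 : Filter.Tendsto (fun n => slope G 1 (1 + hseq n)) atTop (nhds (g 1)) :=
      (hasDerivAt_iff_tendsto_slope.1 (hGd 1)).comp hs1
    have hT0 : Filter.Tendsto (fun n => slope G 0 (0 + hseq n)) atTop (nhds (g 0)) :=
      (hasDerivAt_iff_tendsto_slope.1 (hGd 0)).comp hs0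
    have : Filter.Tendsto (fun n => slope G 1 (1 + hseq n) - slope G 0 (0 + hseq n))
        atTop (nhds (g 1 - g 0)) := hT1.sub hT0
    apply this.congr
    intro n
    rw [hAeq n]
    have hne : hseq n ≠ 0 := (hhpos n).ne'
    simp only [slope_def_field]
    norm_num
  -- limit of A via DCT
  have hlim2 : Filter.Tendsto A atTop (nhds (∫ t in Ioo (0:ℝ) 1, deriv g t)) := by
    apply MeasureTheory.tendsto_integral_of_dominated_convergence (fun _ => (C : ℝ))
    · intro n
      exact ((hcont.comp (by continuity)).sub hcont).div_const _ |>.aestronglyMeasurable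
    · exact MeasureTheory.integrableOn_const measure_Ioo_lt_top.ne
    · intro n
      apply Filter.Eventually.of_forall
      intro t
      have := hg.dist_le_mul (t + hseq n) t
      rw [Real.dist_eq, Real.dist_eq] at this
      simp only [add_sub_cancel_left, abs_of_pos (hhpos n)] at this
      rw [Real.norm_eq_abs, abs_div, abs_of_pos (hhpos n), div_le_iff₀ (hhpos n)]
      linarith
    · have hae : ∀ᵐ t ∂(volume.restrict (Ioo (0:ℝ) 1)), DifferentiableAt ℝ g t :=
        MeasureTheory.ae_restrict_of_ae hg.ae_differentiableAt
      filter_upwards [hae] with t ht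
      have hslope := hasDerivAt_iff_tendsto_slope.1 ht.hasDerivAt
      have hst : Filter.Tendsto (fun n => t + hseq n) atTop (nhdsWithin t {t}ᶜ) := by
        apply tendsto_nhdsWithin_of_tendsto_nhds_of_eventually_within
        · simpa using (tendsto_const_nhds.add hh0)
        · exact Filter.Eventually.of_forall (fun n => by
            simp only [mem_compl_iff, mem_singleton_iff]
            have := hhpos n; intro hcontra; nlinarith [hcontra])
      have := hslope.comp hst
      apply this.congr
      intro n
      simp only [Function.comp_apply, slope_def_field, add_sub_cancel_left]
  exact tendsto_nhds_unique hlim1 hlim2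

lemma ae_diff_on {S : SupSetup d} {u : Euc d → ℝ} (hu : W1inf S.Ω u) :
    ∀ᵐ x ∂(volume.restrict S.Ω), DifferentiableAt ℝ u x := by
  obtain ⟨K, hK⟩ := hu
  choose ε hε hball hlip using hK
  classical
  set f : Euc d → Set (Euc d) := fun x =>
    if hx : x ∈ S.Ω then Metric.ball x (ε x hx) else ∅ with hf
  have hcov : ∀ x ∈ S.Ω, f x ∈ nhdsWithin x S.Ω := by
    intro x hx
    apply mem_nhdsWithin_of_mem_nhds
    simp only [hf, dif_pos hx]
    exact Metric.ball_mem_nhds x (hε x hx)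
  obtain ⟨T, hTsub, hTc, hTcov⟩ := TopologicalSpace.countable_cover_nhdsWithin hcov
  have hdiff : ∀ x ∈ T, ∀ᵐ z ∂(volume : Measure (Euc d)),
      z ∈ f x → DifferentiableAt ℝ u z := by
    intro x hxT
    have hx : x ∈ S.Ω := hTsub hxT
    have := (hlip x hx).ae_differentiableWithinAt_of_mem (μ := volume)
    filter_upwards [this] with z hz hzf
    simp only [hf, dif_pos hx] at hzf
    exact (hz hzf).differentiableAt (Metric.isOpen_ball.mem_nhds hzf)
  rw [MeasureTheory.ae_restrict_iff' S.isOpen_Ω.measurableSet]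
  have hall := (MeasureTheory.ae_ball_iff hTc).2 hdiff
  filter_upwards [hall] with z hz hzΩ
  obtain ⟨x, hxT, hzf⟩ := by
    have := hTcov hzΩ
    simpa only [mem_iUnion, exists_prop] using this
  exact hz x hxT hzf

lemma clamp_lip : LipschitzWith 1 (fun s : ℝ => max 0 (min 1 s)) := by
  have h := (LipschitzWith.id.min_const 1).max_const 0
  have heq : (fun s : ℝ => max 0 (min 1 s)) = fun s : ℝ => max (min (id s) 1) 0 := by
    funext s; rw [max_comm, min_comm]; rfl
  rw [heq]; exact h

lemma inner_gradient_eq {u : Euc d → ℝ} (x q : Euc d) :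
    (inner ℝ (gradient u x) q : ℝ) = fderiv ℝ u x q := by
  unfold gradient
  exact InnerProductSpace.toDual_symm_apply

lemma reverse_dir {S : SupSetup d} {lam : ℝ} (hlam : 0 ≤ lam) {u : Euc d → ℝ}
    (hp : ∀ x ∈ S.Ω, ∀ y ∈ S.Ω, ENNReal.ofReal (u y - u x) ≤ pdist S lam x y) :
    ∀ x ∈ S.Ω, S.H x (gradient u x) ≤ lam := by
  intro x hx
  obtain ⟨M, hM0, hM⟩ := S.H_coercive lam
  by_cases hdiff : DifferentiableAt ℝ u x
  swap
  · rw [gradient_eq_zero_of_not_differentiableAt hdiff, S.H_zero x hx]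
    exact hlam
  -- support function inequality
  have hsupp : ∀ q : Euc d, (inner ℝ (gradient u x) q : ℝ) ≤ Lfun S lam x q := by
    intro q
    have hkey : ∀ ε > (0:ℝ), (inner ℝ (gradient u x) q : ℝ) ≤ Lfun S lam x q + ε * ‖q‖ := by
      intro ε hε
      obtain ⟨δ, hδ, hδ'⟩ := Lfun_usc hlam hM hx hε
      obtain ⟨r, hr, hball⟩ := Metric.isOpen_iff.1 S.isOpen_Ω x hx
      set t₀ : ℝ := min r δ / (‖q‖ + 1) with ht₀def
      have ht₀ : 0 < t₀ := by positivity
      have hstep : ∀ t : ℝ, 0 < t → t < t₀ →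
          u (x + t • q) - u x ≤ t * (Lfun S lam x q + ε * ‖q‖) := by
        intro t ht htt
        have htq : t * ‖q‖ < min r δ := by
          have h1 : t * (‖q‖ + 1) < t₀ * (‖q‖ + 1) := by
            apply mul_lt_mul_of_pos_right htt (by positivity)
          have h2 : t₀ * (‖q‖ + 1) = min r δ := by
            rw [ht₀def]; field_simp
          nlinarith [norm_nonneg q]
        set c : Euc d := t • q with hc
        set γ : ℝ → Euc d := fun s => x + (max 0 (min 1 s)) • c with hγdef
        have hnormc : ‖c‖ = t * ‖q‖ := by
          rw [hc, norm_smul, Real.norm_eq_abs, abs_of_pos ht]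
        have hclamp_le : ∀ s : ℝ, |max 0 (min 1 s)| ≤ 1 := by
          intro s
          rw [abs_of_nonneg (le_max_left 0 _)]
          exact max_le (zero_le_one) (min_le_left 1 s)
        have hγdist : ∀ s : ℝ, dist (γ s) x ≤ t * ‖q‖ := by
          intro s
          rw [hγdef]
          simp only [dist_eq_norm, add_sub_cancel_left]
          calc ‖(max 0 (min 1 s)) • c‖ = |max 0 (min 1 s)| * ‖c‖ := by
                rw [norm_smul, Real.norm_eq_abs]
            _ ≤ 1 * ‖c‖ := mul_le_mul_of_nonneg_right (hclamp_le s) (norm_nonneg c)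
            _ = t * ‖q‖ := by rw [one_mul, hnormc]
        have hγmem : ∀ s : ℝ, γ s ∈ S.Ω := by
          intro s
          apply hball
          rw [Metric.mem_ball]
          exact lt_of_le_of_lt (hγdist s) (lt_of_lt_of_le htq (min_le_left r δ))
        have hγpath : IsPathIn S.Ω x (x + c) γ := by
          refine ⟨⟨‖c‖₊, ?_⟩, fun s _ => hγmem s, ?_, ?_⟩
          · apply LipschitzWith.of_dist_le_mul
            intro a b
            have hcl := clamp_lip.dist_le_mul a b
            rw [NNReal.coe_one, one_mul] at hcl
            rw [hγdef]
            simp only [dist_eq_norm, add_sub_add_left_eq_sub, ← sub_smul]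
            rw [norm_smul, Real.norm_eq_abs]
            calc |max 0 (min 1 a) - max 0 (min 1 b)| * ‖c‖ ≤ dist a b * ‖c‖ := by
                  apply mul_le_mul_of_nonneg_right _ (norm_nonneg c)
                  simpa [Real.dist_eq] using hcl
              _ = ‖c‖₊ * dist a b := by rw [mul_comm]; norm_num
          · show x + (max 0 (min 1 0)) • c = x; norm_num
          · show x + (max 0 (min 1 1)) • c = x + c; norm_num
        have hxy : x + c ∈ S.Ω := by
          have h1 := hγmem 1
          have : γ 1 = x + c := by
            show x + (max 0 (min 1 1)) • c = x + c; norm_num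
          rwa [this] at h1
        have hpd := hp x hx (x + c) hxy
        have hpd2 : pdist S lam x (x + c) ≤ ENNReal.ofReal (energy S lam γ) :=
          iInf_le_of_le γ (iInf_le_of_le hγpath le_rfl)
        set B : ℝ := Lfun S lam x c + ε * ‖c‖ with hBdef
        have hB0 : 0 ≤ B := add_nonneg (Lfun_nonneg hlam hM hx c) (by positivity)
        have hder : ∀ s ∈ Ioo (0:ℝ) 1, deriv γ s = c := by
          intro s hs
          have hev : γ =ᶠ[nhds s] (fun w => x + w • c) := by
            filter_upwards [Ioo_mem_nhds hs.1 hs.2] with w hw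
            rw [hγdef]
            simp only
            congr 2
            rw [min_eq_right hw.2.le, max_eq_right hw.1.le]
          rw [hev.deriv_eq]
          have hd : HasDerivAt (fun w : ℝ => x + w • c) c s := by
            simpa using ((hasDerivAt_id s).smul_const c).const_add x
          exact hd.deriv
        have henergy : energy S lam γ ≤ B := by
          rw [energy]
          by_cases hint : MeasureTheory.IntegrableOn
            (fun s => Lfun S lam (γ s) (deriv γ s)) (Ioo (0:ℝ) 1) volume
          · have hle : ∀ᵐ s ∂(volume.restrict (Ioo (0:ℝ) 1)),
                Lfun S lam (γ s) (deriv γ s) ≤ B := by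
              rw [MeasureTheory.ae_restrict_iff' measurableSet_Ioo]
              apply Filter.Eventually.of_forall
              intro s hs
              rw [hder s hs]
              have hγsd : dist (γ s) x < δ :=
                lt_of_le_of_lt (hγdist s) (lt_of_lt_of_le htq (min_le_right r δ))
              have := hδ' (γ s) (hγmem s) hγsd c
              rw [hBdef]; linarith
            calc ∫ s in Ioo (0:ℝ) 1, Lfun S lam (γ s) (deriv γ s)
                ≤ ∫ _ in Ioo (0:ℝ) 1, B :=
                  MeasureTheory.integral_mono_ae hint
                    (MeasureTheory.integrableOn_const measure_Ioo_lt_top.ne) hle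
              _ = B := by simp [Real.volume_Ioo]
          · rw [MeasureTheory.integral_undef hint]; exact hB0
        have hchain : ENNReal.ofReal (u (x + c) - u x) ≤ ENNReal.ofReal B :=
          le_trans hpd (le_trans hpd2 (ENNReal.ofReal_le_ofReal henergy))
        have hfinal : u (x + c) - u x ≤ B := by
          rwa [ENNReal.ofReal_le_ofReal_iff hB0] at hchain
        have hBeq : B = t * (Lfun S lam x q + ε * ‖q‖) := by
          rw [hBdef, hc, hnormc, Lfun_smul hlam hM hx ht.le q]; ring
        rw [← hBeq]; exact hfinal
      -- derivative limit
      set φ : ℝ → ℝ := fun t => u (x + t • q) with hφdef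
      have hφd : HasDerivAt φ ((inner ℝ (gradient u x) q : ℝ)) 0 := by
        have hg : HasDerivAt (fun t : ℝ => x + t • q) q 0 := by
          simpa using ((hasDerivAt_id (0:ℝ)).smul_const q).const_add x
        have hgx : (fun t : ℝ => x + t • q) 0 = x := by norm_num
        have hF : HasFDerivAt u (fderiv ℝ u x) ((fun t : ℝ => x + t • q) 0) := by
          rw [hgx]; exact hdiff.hasFDerivAt
        have := hF.comp_hasDerivAt 0 hg
        rw [inner_gradient_eq]
        exact this
      have hslope := hasDerivAt_iff_tendsto_slope.1 hφd
      have hmono : Filter.Tendsto (slope φ 0) (nhdsWithin 0 (Ioi (0:ℝ)))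
          (nhds ((inner ℝ (gradient u x) q : ℝ))) :=
        hslope.mono_left (nhdsWithin_mono 0 (fun y hy => ne_of_gt hy))
      apply le_of_tendsto hmono
      filter_upwards [Ioo_mem_nhdsGT_of_mem (Set.mem_Ico.2 ⟨le_rfl, ht₀⟩)] with t ht'
      rw [slope_def_field, sub_zero, div_le_iff₀ ht'.1]
      have h1 := hstep t ht'.1 ht'.2
      have hφ0 : φ 0 = u x := by rw [hφdef]; norm_num
      rw [hφ0, hφdef]
      simp only
      linarith
    have h2 : ∀ ε > (0:ℝ), (inner ℝ (gradient u x) q : ℝ) ≤ Lfun S lam x q + ε := by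
      intro ε hε
      have h3 := hkey (ε / (‖q‖ + 1)) (by positivity)
      have h4 : ε / (‖q‖ + 1) * ‖q‖ ≤ ε := by
        rw [div_mul_eq_mul_div, div_le_iff₀ (by positivity)]
        nlinarith [norm_nonneg q]
      linarith
    linarith [le_of_forall_pos_le_add h2]
  -- separation
  by_contra hH
  push_neg at hH
  have hclosed : IsClosed {p : Euc d | S.H x p ≤ lam} := by
    have hcont : Continuous (fun p : Euc d => S.H x p) := by
      rw [continuous_iff_continuousAt]
      intro p
      exact (H_contAt hx).comp (Continuous.continuousAt (by continuity))
    exact isClosed_le hcont continuous_const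
  have hnotmem : gradient u x ∉ {p : Euc d | S.H x p ≤ lam} := by
    simp only [mem_setOf_eq, not_le]; exact hH
  obtain ⟨f, cval, hfa, hfb⟩ :=
    geometric_hahn_banach_closed_point (S.H_quasiconvex x hx lam) hclosed hnotmem
  set q0 : Euc d := (InnerProductSpace.toDual ℝ (Euc d)).symm f with hq0
  have hfq0 : ∀ p : Euc d, f p = (inner ℝ q0 p : ℝ) := by
    intro p; rw [hq0]; exact (InnerProductSpace.toDual_symm_apply).symm
  have hLle : Lfun S lam x q0 ≤ cval := by
    apply csSup_le (K_img_nonempty hlam hx q0)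
    rintro r ⟨p, hp', rfl⟩
    show (inner ℝ p q0 : ℝ) ≤ cval
    rw [real_inner_comm, ← hfq0]
    exact (hfa p hp').le
  have hgb : cval < (inner ℝ (gradient u x) q0 : ℝ) := by
    rw [real_inner_comm, ← hfq0]; exact hfb
  linarith [hsupp q0, hLle, hgb]

set_option maxHeartbeats 1000000 in
lemma forward_dir {S : SupSetup d} {lam : ℝ} (hlam : 0 ≤ lam) {u : Euc d → ℝ}
    (hu : W1inf S.Ω u) (huc : ContinuousOn u S.Ω)
    (hae : ∀ᵐ x ∂(volume.restrict S.Ω), S.H x (gradient u x) ≤ lam) :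
    ∀ x ∈ S.Ω, ∀ y ∈ S.Ω, ENNReal.ofReal (u y - u x) ≤ pdist S lam x y := by
  intro x hx y hy
  refine le_iInf fun γ => le_iInf fun hγ => ?_
  obtain ⟨⟨Kγ, hKγ⟩, hγΩ, hγ0, hγ1⟩ := hγ
  obtain ⟨M, hM0, hM⟩ := S.H_coercive lam
  -- the compact image and a safety margin
  set Γ : Set (Euc d) := γ '' Icc 0 1 with hΓdef
  have hΓcomp : IsCompact Γ := isCompact_Icc.image hKγ.continuous
  have hΓΩ : Γ ⊆ S.Ω := by
    rintro z ⟨t, ht, rfl⟩; exact hγΩ t ht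
  obtain ⟨ρ, hρ, hρsub⟩ := hΓcomp.exists_cthickening_subset_open S.isOpen_Ω hΓΩ
  have hmemv : ∀ t ∈ Icc (0:ℝ) 1, ∀ w : Euc d, ‖w‖ ≤ ρ → γ t + w ∈ S.Ω := by
    intro t ht w hw
    apply hρsub
    apply Metric.mem_cthickening_of_dist_le (γ t + w) (γ t) ρ Γ ⟨t, ht, rfl⟩
    simpa [dist_eq_norm] using hw
  have hmemv' : ∀ t ∈ Icc (0:ℝ) 1, ∀ w : Euc d, ‖w‖ ≤ ρ →
      γ t + w ∈ Metric.cthickening ρ Γ := by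
    intro t ht w hw
    apply Metric.mem_cthickening_of_dist_le (γ t + w) (γ t) ρ Γ ⟨t, ht, rfl⟩
    simpa [dist_eq_norm] using hw
  -- the null set of bad points
  set P : Euc d → Prop := fun z => DifferentiableAt ℝ u z ∧ S.H z (gradient u z) ≤ lam
    with hPdef
  have hPae : ∀ᵐ z ∂(volume.restrict S.Ω), P z := (ae_diff_on hu).and hae
  have hbad0 : volume ({z : Euc d | ¬ P z} ∩ S.Ω) = 0 := by
    have h1 : (volume.restrict S.Ω) {z : Euc d | ¬ P z} = 0 := by
      rw [← MeasureTheory.ae_iff]; exact hPae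
    rwa [MeasureTheory.Measure.restrict_apply' S.isOpen_Ω.measurableSet] at h1
  set N : Set (Euc d) := toMeasurable volume ({z : Euc d | ¬ P z} ∩ S.Ω) with hNdef
  have hNm : MeasurableSet N := measurableSet_toMeasurable _ _
  have hN0 : volume N = 0 := by rw [hNdef, measure_toMeasurable]; exact hbad0
  have hbadN : {z : Euc d | ¬ P z} ∩ S.Ω ⊆ N := subset_toMeasurable _ _
  -- Fubini: almost every translation vector is good
  have hsec : ∀ᵐ w ∂(volume : Measure (Euc d)), volume {t : ℝ | γ t + w ∈ N} = 0 := by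
    set sset : Set (Euc d × ℝ) := {z | γ z.2 + z.1 ∈ N} with hsset
    have hcont : Continuous (fun z : Euc d × ℝ => γ z.2 + z.1) :=
      (hKγ.continuous.comp continuous_snd).add continuous_fst
    have hsm : MeasurableSet sset := hcont.measurable hNm
    have hprod : (volume.prod volume) sset = 0 := by
      rw [MeasureTheory.Measure.prod_apply_symm hsm]
      have : ∀ t : ℝ, volume ((fun w : Euc d => (w, t)) ⁻¹' sset) = 0 := by
        intro t
        have : ((fun w : Euc d => (w, t)) ⁻¹' sset) = (fun w : Euc d => γ t + w) ⁻¹' N := rfl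
        rw [this, measure_preimage_add]
        exact hN0
      simp only [this]
      simp
    have h5 := MeasureTheory.Measure.measure_ae_null_of_prod_null hprod
    filter_upwards [h5] with w hw
    exact hw
  set Good : Set (Euc d) := {w | volume {t : ℝ | γ t + w ∈ N} = 0} with hGooddef
  have hGoodc : volume Goodᶜ = 0 := by
    have h := hsec
    rw [MeasureTheory.ae_iff] at h
    rw [Set.compl_def]
    exact h
  have hvex : ∀ n : ℕ, ∃ w : Euc d, ‖w‖ < min ρ (1/(n+1)) ∧ w ∈ Good := by
    intro n
    by_contra hcon
    push_neg at hcon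
    have hsub : Metric.ball (0:Euc d) (min ρ (1/(n+1))) ⊆ Goodᶜ := by
      intro w hw
      rw [mem_ball_zero_iff] at hw
      exact hcon w hw
    have h1 : volume (Metric.ball (0:Euc d) (min ρ (1/(n+1)))) = 0 :=
      le_antisymm (le_trans (measure_mono hsub) hGoodc.le) zero_le
    have h2 : 0 < volume (Metric.ball (0:Euc d) (min ρ (1/(n+1)))) :=
      Metric.measure_ball_pos volume 0 (by positivity)
    rw [h1] at h2
    exact lt_irrefl _ h2
  choose vs hvsn hvsGood using hvex
  have hvsρ : ∀ n, ‖vs n‖ ≤ ρ := fun n => (lt_of_lt_of_le (hvsn n) (min_le_left _ _)).le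
  have hvs0 : Filter.Tendsto vs atTop (nhds (0 : Euc d)) := by
    apply squeeze_zero_norm (fun n => (lt_of_lt_of_le (hvsn n) (min_le_right _ _)).le)
    exact tendsto_one_div_add_atTop_nhds_zero_nat
  -- uniform local Lipschitz property of u near Γ
  obtain ⟨Ku, hKu⟩ := hu
  choose εf hεf hballf hlipf using hKu
  have hΓ'comp : IsCompact (Metric.cthickening ρ Γ) := hΓcomp.cthickening
  have hΓ'Ω : Metric.cthickening ρ Γ ⊆ S.Ω := hρsub
  obtain ⟨δu, hδu, hδu'⟩ := lebesgue_number_lemma_of_metric (ι := {z : Euc d // z ∈ S.Ω})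
      (c := fun i => Metric.ball (i : Euc d) (εf i i.2))
      hΓ'comp (fun i => Metric.isOpen_ball)
      (fun z hz => mem_iUnion.2 ⟨⟨z, hΓ'Ω hz⟩, Metric.mem_ball_self (hεf z (hΓ'Ω hz))⟩)
  have hulip : ∀ z ∈ Metric.cthickening ρ Γ, LipschitzOnWith Ku u (Metric.ball z δu) := by
    intro z hz
    obtain ⟨i, hi⟩ := hδu' z hz
    exact (hlipf i i.2).mono hi
  -- the comparison integrand along γ and its translates
  set w : ℝ → Euc d := fun s => deriv γ s with hwdef
  have hwbound : ∀ s, ‖w s‖ ≤ Kγ := fun s => norm_deriv_le_lip hKγ s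
  set ℓ : ℝ → ℝ := fun s => Lext S lam (γ s, w s) with hℓdef
  set ℓv : Euc d → ℝ → ℝ := fun v s => Lext S lam (γ s + v, w s) with hℓvdef
  have hmeasℓ : Measurable ℓ :=
    (measurable_Lext hlam).comp (hKγ.continuous.measurable.prodMk (measurable_deriv γ))
  have hmeasℓv : ∀ v, Measurable (ℓv v) := fun v =>
    (measurable_Lext hlam).comp
      ((hKγ.continuous.measurable.add_const v).prodMk (measurable_deriv γ))
  have hLext_nonneg : ∀ z : Euc d × Euc d, 0 ≤ Lext S lam z := by
    intro z
    rw [Lext]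
    split_ifs with hz
    · exact Lfun_nonneg hlam hM hz z.2
    · exact le_refl 0
  have hLext_bound : ∀ (z : Euc d) (s : ℝ), Lext S lam (z, w s) ≤ M * Kγ := by
    intro z s
    rw [Lext]
    split_ifs with hz
    · calc Lfun S lam z (w s) ≤ M * ‖w s‖ := Lfun_le hlam hM hz (w s)
        _ ≤ M * Kγ := mul_le_mul_of_nonneg_left (hwbound s) hM0
    · positivity
  -- the per-translate inequality
  have hn_ineq : ∀ n : ℕ, u (y + vs n) - u (x + vs n) ≤ ∫ s in Ioo (0:ℝ) 1, ℓv (vs n) s := by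
    intro n
    set v : Euc d := vs n with hvdef
    have hvρ : ‖v‖ ≤ ρ := hvsρ n
    set gn : ℝ → ℝ := fun s => u (γ (max 0 (min 1 s)) + v) with hgndef
    -- gn is Lipschitz
    have hgnlip : LipschitzWith (Real.toNNReal ((Ku:ℝ) * (Kγ:ℝ))) gn := by
      apply lipschitzWith_of_locally (by positivity) (δ := δu / ((Kγ:ℝ) + 1)) (by positivity)
      intro a b hab habδ
      set a' := max 0 (min 1 a) with ha'
      set b' := max 0 (min 1 b) with hb'
      have ha'Icc : a' ∈ Icc (0:ℝ) 1 := ⟨le_max_left _ _,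
        max_le zero_le_one (min_le_left _ _)⟩
      have hb'Icc : b' ∈ Icc (0:ℝ) 1 := ⟨le_max_left _ _,
        max_le zero_le_one (min_le_left _ _)⟩
      have hd' : |b' - a'| ≤ b - a := by
        have := clamp_lip.dist_le_mul b a
        rw [NNReal.coe_one, one_mul, Real.dist_eq, Real.dist_eq] at this
        rw [← abs_of_nonneg (by linarith : (0:ℝ) ≤ b - a)]
        exact this
      have hz1 : γ a' + v ∈ Metric.cthickening ρ Γ := hmemv' a' ha'Icc v hvρ
      have hz2 : γ b' + v ∈ Metric.cthickening ρ Γ := hmemv' b' hb'Icc v hvρ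
      have hdistz : dist (γ b' + v) (γ a' + v) ≤ (Kγ:ℝ) * (b - a) := by
        have h1 : dist (γ b' + v) (γ a' + v) = dist (γ b') (γ a') := by
          simp [dist_eq_norm]
        rw [h1]
        calc dist (γ b') (γ a') ≤ (Kγ:ℝ) * dist b' a' := hKγ.dist_le_mul b' a'
          _ ≤ (Kγ:ℝ) * (b - a) := by
            apply mul_le_mul_of_nonneg_left _ Kγ.coe_nonneg
            rw [Real.dist_eq]; exact hd'
      have hmem1 : γ a' + v ∈ Metric.ball (γ a' + v) δu := Metric.mem_ball_self hδu
      have hmem2 : γ b' + v ∈ Metric.ball (γ a' + v) δu := by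
        rw [Metric.mem_ball]
        calc dist (γ b' + v) (γ a' + v) ≤ (Kγ:ℝ) * (b - a) := hdistz
          _ ≤ (Kγ:ℝ) * (δu / ((Kγ:ℝ) + 1)) :=
            mul_le_mul_of_nonneg_left habδ Kγ.coe_nonneg
          _ < δu := by
            rw [mul_div_assoc']
            rw [div_lt_iff₀ (by positivity)]
            nlinarith [Kγ.coe_nonneg, hδu]
      have := (hulip _ hz1).dist_le_mul _ hmem2 _ hmem1
      rw [Real.dist_eq] at this
      calc |gn b - gn a| ≤ (Ku:ℝ) * dist (γ b' + v) (γ a' + v) := this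
        _ ≤ (Ku:ℝ) * ((Kγ:ℝ) * (b - a)) :=
          mul_le_mul_of_nonneg_left hdistz Ku.coe_nonneg
        _ = (Ku:ℝ) * (Kγ:ℝ) * (b - a) := by ring
    -- a.e. derivative bound
    have haed : ∀ᵐ s ∂(volume.restrict (Ioo (0:ℝ) 1)), deriv gn s ≤ ℓv v s := by
      have h1 : ∀ᵐ s ∂(volume.restrict (Ioo (0:ℝ) 1)), DifferentiableAt ℝ γ s :=
        MeasureTheory.ae_restrict_of_ae hKγ.ae_differentiableAt
      have h2 : ∀ᵐ s ∂(volume.restrict (Ioo (0:ℝ) 1)), γ s + v ∉ N := by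
        apply MeasureTheory.ae_restrict_of_ae
        have hv : volume {t : ℝ | γ t + v ∈ N} = 0 := hvsGood n
        rw [MeasureTheory.ae_iff]
        simpa using hv
      have h3 : ∀ᵐ s ∂(volume.restrict (Ioo (0:ℝ) 1)), s ∈ Ioo (0:ℝ) 1 :=
        MeasureTheory.ae_restrict_mem measurableSet_Ioo
      filter_upwards [h1, h2, h3] with s hs1 hs2 hs3
      set z : Euc d := γ s + v with hzdef
      have hzΩ : z ∈ S.Ω := hmemv s (Ioo_subset_Icc_self hs3) v hvρ
      have hPz : P z := by
        by_contra hnp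
        exact hs2 (hbadN ⟨hnp, hzΩ⟩)
      obtain ⟨hzdiff, hzH⟩ := hPz
      -- gn agrees with s ↦ u (γ s + v) near s
      have hev : gn =ᶠ[nhds s] (fun r => u (γ r + v)) := by
        filter_upwards [Ioo_mem_nhds hs3.1 hs3.2] with r hr
        rw [hgndef]
        simp only
        rw [min_eq_right hr.2.le, max_eq_right hr.1.le]
      have hder1 : HasDerivAt (fun r : ℝ => γ r + v) (deriv γ s) s :=
        hs1.hasDerivAt.add_const v
      have hF : HasFDerivAt u (fderiv ℝ u z) ((fun r : ℝ => γ r + v) s) := hzdiff.hasFDerivAt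
      have hder2 : HasDerivAt (fun r : ℝ => u (γ r + v)) (fderiv ℝ u z (deriv γ s)) s :=
        hF.comp_hasDerivAt s hder1
      have hder3 : HasDerivAt gn (fderiv ℝ u z (deriv γ s)) s :=
        hder2.congr_of_eventuallyEq hev
      rw [hder3.deriv]
      have hinner : fderiv ℝ u z (deriv γ s) = (inner ℝ (gradient u z) (deriv γ s) : ℝ) :=
        (inner_gradient_eq z (deriv γ s)).symm
      rw [hinner]
      have hle : (inner ℝ (gradient u z) (w s) : ℝ) ≤ Lfun S lam z (w s) :=
        inner_le_Lfun hM hzΩ hzH (w s)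
      have hℓveq : ℓv v s = Lfun S lam z (w s) := by
        rw [hℓvdef]
        simp only
        rw [Lext, if_pos hzΩ]
      rw [hℓveq]
      exact hle
    -- FTC and comparison
    have hftc : gn 1 - gn 0 = ∫ s in Ioo (0:ℝ) 1, deriv gn s := lip_ftc hgnlip
    have hgn1 : gn 1 = u (y + v) := by
      rw [hgndef]; simp only
      rw [min_eq_left le_rfl, max_eq_right zero_le_one, hγ1]
    have hgn0 : gn 0 = u (x + v) := by
      rw [hgndef]; simp only
      rw [min_eq_right zero_le_one, max_eq_left le_rfl, hγ0]
    have hintd : MeasureTheory.Integrable (deriv gn) (volume.restrict (Ioo (0:ℝ) 1)) := by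
      apply MeasureTheory.Integrable.mono'
        (MeasureTheory.integrableOn_const measure_Ioo_lt_top.ne
          : MeasureTheory.IntegrableOn (fun _ => ((Ku:ℝ) * (Kγ:ℝ))) (Ioo (0:ℝ) 1) volume)
      · exact (measurable_deriv gn).aestronglyMeasurable
      · apply Filter.Eventually.of_forall
        intro s
        have := norm_deriv_le_lip hgnlip s
        rwa [Real.coe_toNNReal _ (by positivity)] at this
    have hintℓ : MeasureTheory.Integrable (ℓv v) (volume.restrict (Ioo (0:ℝ) 1)) := by
      apply MeasureTheory.Integrable.mono'
        (MeasureTheory.integrableOn_const measure_Ioo_lt_top.ne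
          : MeasureTheory.IntegrableOn (fun _ => M * (Kγ:ℝ)) (Ioo (0:ℝ) 1) volume)
      · exact (hmeasℓv v).aestronglyMeasurable
      · apply Filter.Eventually.of_forall
        intro s
        rw [Real.norm_eq_abs, abs_of_nonneg (hLext_nonneg _)]
        exact hLext_bound _ s
    calc u (y + v) - u (x + v) = gn 1 - gn 0 := by rw [hgn1, hgn0]
      _ = ∫ s in Ioo (0:ℝ) 1, deriv gn s := hftc
      _ ≤ ∫ s in Ioo (0:ℝ) 1, ℓv v s := MeasureTheory.integral_mono_ae hintd hintℓ haed
  -- pass to the limit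
  have hInt_eq : ∀ n : ℕ, ENNReal.ofReal (∫ s in Ioo (0:ℝ) 1, ℓv (vs n) s)
      = ∫⁻ s in Ioo (0:ℝ) 1, ENNReal.ofReal (ℓv (vs n) s) := by
    intro n
    apply MeasureTheory.ofReal_integral_eq_lintegral_ofReal
    · apply MeasureTheory.Integrable.mono'
        (MeasureTheory.integrableOn_const measure_Ioo_lt_top.ne
          : MeasureTheory.IntegrableOn (fun _ => M * (Kγ:ℝ)) (Ioo (0:ℝ) 1) volume)
      · exact (hmeasℓv (vs n)).aestronglyMeasurable
      · apply Filter.Eventually.of_forall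
        intro s
        rw [Real.norm_eq_abs, abs_of_nonneg (hLext_nonneg _)]
        exact hLext_bound _ s
    · exact Filter.Eventually.of_forall (fun s => hLext_nonneg _)
  have hlim : Filter.Tendsto (fun n => u (y + vs n) - u (x + vs n)) atTop
      (nhds (u y - u x)) := by
    have hcy : Filter.Tendsto (fun n => y + vs n) atTop (nhds y) := by
      have := tendsto_const_nhds (x := y) (f := atTop (α := ℕ)) |>.add hvs0
      simpa using this
    have hcx : Filter.Tendsto (fun n => x + vs n) atTop (nhds x) := by
      have := tendsto_const_nhds (x := x) (f := atTop (α := ℕ)) |>.add hvs0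
      simpa using this
    exact ((huc.continuousAt (S.isOpen_Ω.mem_nhds hy)).tendsto.comp hcy).sub
      ((huc.continuousAt (S.isOpen_Ω.mem_nhds hx)).tendsto.comp hcx)
  have hstep1 : ENNReal.ofReal (u y - u x) =
      Filter.limsup (fun n => ENNReal.ofReal (u (y + vs n) - u (x + vs n))) atTop := by
    symm
    apply Filter.Tendsto.limsup_eq
    exact (ENNReal.continuous_ofReal.tendsto _).comp hlim
  have hstep2 : Filter.limsup (fun n => ENNReal.ofReal (u (y + vs n) - u (x + vs n))) atTop
      ≤ Filter.limsup (fun n => ∫⁻ s in Ioo (0:ℝ) 1, ENNReal.ofReal (ℓv (vs n) s)) atTop := by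
    refine Filter.limsup_le_limsup (Filter.Eventually.of_forall fun n => ?_)
    show ENNReal.ofReal (u (y + vs n) - u (x + vs n))
      ≤ ∫⁻ s in Ioo (0:ℝ) 1, ENNReal.ofReal (ℓv (vs n) s)
    rw [← hInt_eq n]
    exact ENNReal.ofReal_le_ofReal (hn_ineq n)
  have hstep3 : Filter.limsup (fun n => ∫⁻ s in Ioo (0:ℝ) 1, ENNReal.ofReal (ℓv (vs n) s)) atTop
      ≤ ∫⁻ s in Ioo (0:ℝ) 1, Filter.limsup (fun n => ENNReal.ofReal (ℓv (vs n) s)) atTop := by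
    apply MeasureTheory.limsup_lintegral_le (g := fun _ => ENNReal.ofReal (M * (Kγ:ℝ)))
    · exact fun n => (hmeasℓv (vs n)).ennreal_ofReal
    · intro n
      apply Filter.Eventually.of_forall
      intro s
      exact ENNReal.ofReal_le_ofReal (hLext_bound _ s)
    · rw [MeasureTheory.lintegral_const]
      apply ENNReal.mul_ne_top ENNReal.ofReal_ne_top
      simp [Real.volume_Ioo]
  have hstep4 : ∫⁻ s in Ioo (0:ℝ) 1, Filter.limsup (fun n => ENNReal.ofReal (ℓv (vs n) s)) atTop
      ≤ ∫⁻ s in Ioo (0:ℝ) 1, ENNReal.ofReal (ℓ s) := by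
    apply MeasureTheory.lintegral_mono_ae
    rw [MeasureTheory.ae_restrict_iff' measurableSet_Ioo]
    apply Filter.Eventually.of_forall
    intro s hs
    have hγsΩ : γ s ∈ S.Ω := hγΩ s (Ioo_subset_Icc_self hs)
    -- limsup bound at s
    have hεbound : ∀ ε : ℝ, 0 < ε →
        Filter.limsup (fun n => ENNReal.ofReal (ℓv (vs n) s)) atTop
          ≤ ENNReal.ofReal (ℓ s + ε * (Kγ:ℝ)) := by
      intro ε hε
      obtain ⟨δ, hδpos, hδ'⟩ := Lfun_usc hlam hM hγsΩ hε
      have hbnd : ∀ᶠ n in atTop,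
          ENNReal.ofReal (ℓv (vs n) s) ≤ ENNReal.ofReal (ℓ s + ε * (Kγ:ℝ)) := by
        have hev : ∀ᶠ n in atTop, ‖vs n‖ < δ := by
          have := hvs0.norm
          rw [show ‖(0:Euc d)‖ = 0 by simp] at this
          exact this.eventually_lt_const hδpos
        filter_upwards [hev] with n hn
        apply ENNReal.ofReal_le_ofReal
        have hzΩ : γ s + vs n ∈ S.Ω := hmemv s (Ioo_subset_Icc_self hs) (vs n) (hvsρ n)
        have hdist : dist (γ s + vs n) (γ s) < δ := by
          simpa [dist_eq_norm] using hn
        have h1 : ℓv (vs n) s = Lfun S lam (γ s + vs n) (w s) := by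
          rw [hℓvdef]; simp only; rw [Lext, if_pos hzΩ]
        have h2 : ℓ s = Lfun S lam (γ s) (w s) := by
          rw [hℓdef]; simp only; rw [Lext, if_pos hγsΩ]
        rw [h1, h2]
        calc Lfun S lam (γ s + vs n) (w s) ≤ Lfun S lam (γ s) (w s) + ε * ‖w s‖ :=
            hδ' _ hzΩ hdist (w s)
          _ ≤ Lfun S lam (γ s) (w s) + ε * (Kγ:ℝ) := by
            have := mul_le_mul_of_nonneg_left (hwbound s) hε.le
            linarith
      calc Filter.limsup (fun n => ENNReal.ofReal (ℓv (vs n) s)) atTop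
          ≤ Filter.limsup (fun _ => ENNReal.ofReal (ℓ s + ε * (Kγ:ℝ))) atTop :=
            Filter.limsup_le_limsup hbnd
        _ = ENNReal.ofReal (ℓ s + ε * (Kγ:ℝ)) := Filter.limsup_const _
    -- conclude via ε → 0
    apply ENNReal.le_of_forall_pos_le_add
    intro ε hε _
    have hεr : (0:ℝ) < ε / ((Kγ:ℝ) + 1) := by positivity
    calc Filter.limsup (fun n => ENNReal.ofReal (ℓv (vs n) s)) atTop
        ≤ ENNReal.ofReal (ℓ s + (ε / ((Kγ:ℝ) + 1)) * (Kγ:ℝ)) := hεbound _ hεr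
      _ ≤ ENNReal.ofReal (ℓ s) + ENNReal.ofReal ((ε / ((Kγ:ℝ) + 1)) * (Kγ:ℝ)) :=
          ENNReal.ofReal_add_le
      _ ≤ ENNReal.ofReal (ℓ s) + ε := by
        refine add_le_add le_rfl ?_
        rw [← ENNReal.ofReal_coe_nnreal]
        apply ENNReal.ofReal_le_ofReal
        rw [div_mul_eq_mul_div, div_le_iff₀ (by positivity)]
        nlinarith [Kγ.coe_nonneg, ε.coe_nonneg]
  have hstep5 : ∫⁻ s in Ioo (0:ℝ) 1, ENNReal.ofReal (ℓ s)
      = ENNReal.ofReal (energy S lam γ) := by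
    have hintℓ : MeasureTheory.Integrable ℓ (volume.restrict (Ioo (0:ℝ) 1)) := by
      apply MeasureTheory.Integrable.mono'
        (MeasureTheory.integrableOn_const measure_Ioo_lt_top.ne
          : MeasureTheory.IntegrableOn (fun _ => M * (Kγ:ℝ)) (Ioo (0:ℝ) 1) volume)
      · exact hmeasℓ.aestronglyMeasurable
      · apply Filter.Eventually.of_forall
        intro s
        rw [Real.norm_eq_abs, abs_of_nonneg (hLext_nonneg _)]
        exact hLext_bound _ s
    rw [← MeasureTheory.ofReal_integral_eq_lintegral_ofReal hintℓ
      (Filter.Eventually.of_forall (fun s => hLext_nonneg _))]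
    congr 1
    rw [energy]
    apply MeasureTheory.setIntegral_congr_fun measurableSet_Ioo
    intro s hs
    have hγsΩ : γ s ∈ S.Ω := hγΩ s (Ioo_subset_Icc_self hs)
    rw [hℓdef]
    simp only
    rw [Lext, if_pos hγsΩ]
  calc ENNReal.ofReal (u y - u x)
      = Filter.limsup (fun n => ENNReal.ofReal (u (y + vs n) - u (x + vs n))) atTop := hstep1
    _ ≤ Filter.limsup (fun n => ∫⁻ s in Ioo (0:ℝ) 1, ENNReal.ofReal (ℓv (vs n) s)) atTop :=
        hstep2
    _ ≤ ∫⁻ s in Ioo (0:ℝ) 1, Filter.limsup (fun n => ENNReal.ofReal (ℓv (vs n) s)) atTop :=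
        hstep3
    _ ≤ ∫⁻ s in Ioo (0:ℝ) 1, ENNReal.ofReal (ℓ s) := hstep4
    _ = ENNReal.ofReal (energy S lam γ) := hstep5

end Aux

/-- `H(x,Du(x)) ≤ λ` a.e. iff `u(y) - u(x) ≤ d_λ(x,y)` for all `x,y ∈ Ω`;
moreover, if `u` is continuous up to the boundary, the inequality extends to `cl Ω`. -/
theorem stmt4 {d : ℕ} (S : SupSetup d) (lam : ℝ) (hlam : 0 ≤ lam) (u : Euc d → ℝ)
    (hu : W1inf S.Ω u) (huc : ContinuousOn u S.Ω) :
    ((∀ᵐ x ∂(volume.restrict S.Ω), S.H x (gradient u x) ≤ lam) ↔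
      ∀ x ∈ S.Ω, ∀ y ∈ S.Ω, ENNReal.ofReal (u y - u x) ≤ pdist S lam x y) ∧
    (ContinuousOn u (closure S.Ω) →
      (∀ᵐ x ∂(volume.restrict S.Ω), S.H x (gradient u x) ≤ lam) →
      ∀ x ∈ closure S.Ω, ∀ y ∈ closure S.Ω,
        ENNReal.ofReal (u y - u x) ≤ pdistCl S lam x y) := by
  constructor
  · constructor
    · intro hae
      exact forward_dir hlam hu huc hae
    · intro hp
      rw [MeasureTheory.ae_restrict_iff' S.isOpen_Ω.measurableSet]
      exact Filter.Eventually.of_forall (fun z hz => reverse_dir hlam hp z hz)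
  · intro hcl hae x hxcl y hycl
    refine le_iInf fun xs => le_iInf fun ys => le_iInf fun hxs => le_iInf fun hys =>
      le_iInf fun hxt => le_iInf fun hyt => ?_
    have hfor := forward_dir hlam hu huc hae
    have hseq : ∀ n, ENNReal.ofReal (u (ys n) - u (xs n)) ≤ pdist S lam (xs n) (ys n) :=
      fun n => hfor (xs n) (hxs n) (ys n) (hys n)
    have hty : Filter.Tendsto (fun n => u (ys n)) atTop (nhds (u y)) := by
      apply (hcl y hycl).tendsto.comp
      apply tendsto_nhdsWithin_of_tendsto_nhds_of_eventually_within _ hyt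
      exact Filter.Eventually.of_forall (fun n => subset_closure (hys n))
    have htx : Filter.Tendsto (fun n => u (xs n)) atTop (nhds (u x)) := by
      apply (hcl x hxcl).tendsto.comp
      apply tendsto_nhdsWithin_of_tendsto_nhds_of_eventually_within _ hxt
      exact Filter.Eventually.of_forall (fun n => subset_closure (hxs n))
    have htend : Filter.Tendsto (fun n => ENNReal.ofReal (u (ys n) - u (xs n))) atTop
        (nhds (ENNReal.ofReal (u y - u x))) :=
      (ENNReal.continuous_ofReal.tendsto _).comp (hty.sub htx)
    calc ENNReal.ofReal (u y - u x)
        = Filter.liminf (fun n => ENNReal.ofReal (u (ys n) - u (xs n))) atTop :=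
          (htend.liminf_eq).symm
      _ ≤ Filter.liminf (fun n => pdist S lam (xs n) (ys n)) atTop :=
          Filter.liminf_le_liminf (Filter.Eventually.of_forall hseq)
end
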